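/- arXiv:1810.11431 — 3 statements merged into one kernel-verified Lean document; each statement's English description precedes it below -/
import Mathlib

section
/- Let {|v_k^{(0)}⟩} and {|v_k^{(1)}⟩} be two mutually unbiased orthonormal bases of a d-dimensional Hilbert space, and let n_i(σ) = Σ_k |k⟩⟨v_k^{(i)}| σ |v_k^{(i)}⟩⟨k| be the measurement channels in these bases. Then for any state σ and any probabilities p_0, p_1 = 1 - p_0, it holds that p_0 S(n_0(σ)) + p_1 S(n_1(σ)) ≥ min(p_0, p_1) · log d. -/
open Matrix Kronecker BigOperators ComplexOrder

noncomputable section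

namespace QI

/-- A density matrix: positive semidefinite with unit trace. -/
def IsDensity {A : Type*} [Fintype A] (ρ : Matrix A A ℂ) : Prop :=
  ρ.PosSemidef ∧ ρ.trace = 1

/-- Von Neumann entropy `S(ρ) = -∑ λᵢ log λᵢ` of (the eigenvalues of) a Hermitian matrix. -/
def vnEntropy {A : Type*} [Fintype A] [DecidableEq A] (ρ : Matrix A A ℂ) : ℝ :=
  if h : ρ.IsHermitian then -∑ i, (h.eigenvalues i) * Real.log (h.eigenvalues i) else 0

/-- Partial trace over the first tensor factor. -/
def ptraceLeft {A B : Type*} [Fintype A] (σ : Matrix (A × B) (A × B) ℂ) : Matrix B B ℂ :=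
  Matrix.of fun i j => ∑ a, σ (a, i) (a, j)

/-- Partial trace over the second tensor factor. -/
def ptraceRight {A B : Type*} [Fintype B] (σ : Matrix (A × B) (A × B) ℂ) : Matrix A A ℂ :=
  Matrix.of fun i j => ∑ b, σ (i, b) (j, b)

/-- Conditional entropy `S(B|B')_σ = S(σ_{BB'}) - S(σ_{B'})`, where the matrix is
indexed by `B × B'` and the first factor is the conditioned-upon... i.e. traced-out one. -/
def condEntropy {B B' : Type*} [Fintype B] [DecidableEq B] [Fintype B'] [DecidableEq B']
    (σ : Matrix (B × B') (B × B') ℂ) : ℝ :=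
  vnEntropy σ - vnEntropy (ptraceLeft σ)

/-- The extension `M ⊗ id_E` of a map on matrices to an ancilla system `E`. -/
def tensorExt {A B E : Type*} (M : Matrix A A ℂ → Matrix B B ℂ)
    (σ : Matrix (A × E) (A × E) ℂ) : Matrix (B × E) (B × E) ℂ :=
  Matrix.of fun p q => M (Matrix.of fun a a' => σ (a, p.2) (a', q.2)) p.1 q.1

/-- A quantum channel: linear, completely positive (every finite ancilla extension preserves
positive semidefiniteness) and trace preserving. -/
def IsCPTP {A B : Type*} [Fintype A] [Fintype B] (M : Matrix A A ℂ → Matrix B B ℂ) : Prop :=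
  (∀ (c : ℂ) (ρ σ : Matrix A A ℂ), M (c • ρ + σ) = c • M ρ + M σ) ∧
  (∀ (k : ℕ) (σ : Matrix (A × Fin k) (A × Fin k) ℂ), σ.PosSemidef →
      (tensorExt M σ).PosSemidef) ∧
  (∀ ρ : Matrix A A ℂ, (M ρ).trace = ρ.trace)

/-- The rank-one projector `|ψ⟩⟨ψ|`. -/
def pureState {A : Type*} (ψ : A → ℂ) : Matrix A A ℂ :=
  Matrix.of fun a a' => ψ a * star (ψ a')

/-- `ψ` is a unit vector. -/
def IsUnitVec {A : Type*} [Fintype A] (ψ : A → ℂ) : Prop :=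
  ∑ a, Complex.normSq (ψ a) = 1

/-- Minimum output entropy of a channel: infimum of `S(M(|ψ⟩⟨ψ|))` over unit vectors `ψ`. -/
def Smin {A B : Type*} [Fintype A] [Fintype B] [DecidableEq B]
    (M : Matrix A A ℂ → Matrix B B ℂ) : ℝ :=
  sInf {x | ∃ ψ : A → ℂ, IsUnitVec ψ ∧ x = vnEntropy (M (pureState ψ))}

/-- Separability: a convex combination of product states. -/
def IsSeparable {A B : Type*} [Fintype A] [Fintype B]
    (σ : Matrix (A × B) (A × B) ℂ) : Prop :=
  ∃ (k : ℕ) (p : Fin k → ℝ) (α : Fin k → Matrix A A ℂ) (β : Fin k → Matrix B B ℂ),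
    (∀ i, 0 ≤ p i) ∧ (∀ i, IsDensity (α i)) ∧ (∀ i, IsDensity (β i)) ∧
    (∑ i, p i = 1) ∧ σ = ∑ i, (p i : ℂ) • (α i ⊗ₖ β i)

end QI

namespace QI

/-- Shannon entropy of a (finitely supported) probability vector. -/
def shannon {ι : Type*} [Fintype ι] (P : ι → ℝ) : ℝ := -∑ k, P k * Real.log (P k)

/-- Binary entropy. -/
def binEnt (p : ℝ) : ℝ := -(p * Real.log p) - (1 - p) * Real.log (1 - p)

end QI

namespace QI

/-- `v` is an orthonormal basis of `ℂ^d` (as a family of vectors). -/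
def IsONB {d : ℕ} (v : Fin d → Fin d → ℂ) : Prop :=
  ∀ k l, ∑ a, star (v k a) * v l a = if k = l then 1 else 0

/-- Two bases are mutually unbiased: all overlaps have modulus squared `1/d`. -/
def IsMUB {d : ℕ} (v0 v1 : Fin d → Fin d → ℂ) : Prop :=
  ∀ k l, Complex.normSq (∑ a, star (v0 k a) * v1 l a) = 1 / d

/-- The outcome distribution `P(k) = ⟨v_k|σ|v_k⟩` of measuring `σ` in the basis `v`. -/
def measProb {d : ℕ} (v : Fin d → Fin d → ℂ) (σ : Matrix (Fin d) (Fin d) ℂ)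
    (k : Fin d) : ℝ :=
  (∑ a, ∑ b, star (v k a) * σ a b * v k b).re

/-- The qc measurement channel `n(σ) = ∑ₖ |k⟩⟨v_k| σ |v_k⟩⟨k|` in the basis `v`. -/
def measChannel {d : ℕ} (v : Fin d → Fin d → ℂ) (σ : Matrix (Fin d) (Fin d) ℂ) :
    Matrix (Fin d) (Fin d) ℂ :=
  Matrix.diagonal fun k => (measProb v σ k : ℂ)

end QI

set_option maxHeartbeats 1000000

section MUBauxSection
namespace MUBaux

/-- compatibility: the complex absolute value as an absolute value. -/
def Complex.abs : AbsoluteValue ℂ ℝ := NormedField.toAbsoluteValue ℂ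

lemma Complex.norm_eq_abs (z : ℂ) : ‖z‖ = Complex.abs z := rfl

lemma Complex.abs_ofReal (r : ℝ) : Complex.abs (r : ℂ) = |r| := by
  show ‖(r : ℂ)‖ = |r|
  simp

lemma Complex.abs_cpow_eq_rpow_re_of_pos {x : ℝ} (hx : 0 < x) (y : ℂ) :
    Complex.abs ((x : ℂ) ^ y) = x ^ y.re :=
  _root_.Complex.norm_cpow_eq_rpow_re_of_pos hx y

lemma Complex.abs_conj (z : ℂ) : Complex.abs ((starRingEnd ℂ) z) = Complex.abs z :=
  _root_.Complex.norm_conj z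

lemma Complex.abs_apply (z : ℂ) : Complex.abs z = Real.sqrt (_root_.Complex.normSq z) :=
  _root_.Complex.norm_def z

lemma Complex.normSq_eq_abs (z : ℂ) : _root_.Complex.normSq z = Complex.abs z ^ 2 :=
  _root_.Complex.normSq_eq_norm_sq z

lemma Complex.sq_abs (z : ℂ) : Complex.abs z ^ 2 = _root_.Complex.normSq z :=
  _root_.Complex.sq_norm z

/-- phase of a complex number (0 for 0) -/
def pphase (w : ℂ) : ℂ := if w = 0 then 0 else w / (Complex.abs w : ℝ)

lemma abs_pphase (w : ℂ) (h : w ≠ 0) : Complex.abs (pphase w) = 1 := by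
  unfold pphase
  rw [if_neg h, map_div₀]
  simp only [Complex.abs_ofReal, abs_of_nonneg (Complex.abs.nonneg w)]
  rw [div_self (by simpa using h)]

lemma abs_pphase_le (w : ℂ) : Complex.abs (pphase w) ≤ 1 := by
  by_cases h : w = 0
  · simp [pphase, h]
  · rw [abs_pphase w h]

lemma pphase_mul_abs (w : ℂ) : pphase w * (Complex.abs w : ℝ) = w := by
  unfold pphase
  split_ifs with h
  · simp [h]
  · rw [div_mul_cancel₀]
    simpa using h

/-- interpolating family: `Xf t k z = phase(t k) * (|t k|^p)^(1-z/2)` -/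
def Xf {d : ℕ} (p : ℝ) (t : Fin d → ℂ) (k : Fin d) (z : ℂ) : ℂ :=
  if t k = 0 then 0 else pphase (t k) * (((Complex.abs (t k) ^ p : ℝ) : ℂ) ^ (1 - z/2))

lemma Xf_diff {d : ℕ} (p : ℝ) (t : Fin d → ℂ) (k : Fin d) : Differentiable ℂ (Xf p t k) := by
  unfold Xf
  split_ifs with h
  · exact differentiable_const 0
  · apply Differentiable.const_mul
    apply Differentiable.const_cpow
    · exact (differentiable_const _).sub (differentiable_id.div_const _)
    · left
      simp only [ne_eq, Complex.ofReal_eq_zero]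
      exact ne_of_gt (Real.rpow_pos_of_pos (Complex.abs.pos h) p)

lemma Xf_abs {d : ℕ} {p : ℝ} (hp : 0 < p) (t : Fin d → ℂ) (k : Fin d) {z : ℂ} (hz : z.re ≠ 2) :
    Complex.abs (Xf p t k z) = (Complex.abs (t k) ^ p) ^ (1 - z.re/2) := by
  have hexp : (1 : ℝ) - z.re/2 ≠ 0 := by
    intro hc; apply hz; linarith
  unfold Xf
  split_ifs with h
  · rw [h]
    simp only [map_zero]
    rw [Real.zero_rpow (ne_of_gt hp), Real.zero_rpow hexp]
  · have habs : (0:ℝ) < Complex.abs (t k) ^ p := Real.rpow_pos_of_pos (Complex.abs.pos h) p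
    rw [_root_.map_mul, Complex.abs_cpow_eq_rpow_re_of_pos habs, abs_pphase _ h, one_mul]
    norm_num

lemma Xf_at_real {d : ℕ} {p : ℝ} (hp : 0 < p) (t : Fin d → ℂ) (k : Fin d) {θ : ℝ}
    (hθ : 1 - θ/2 = 1/p) : Xf p t k (θ : ℂ) = t k := by
  unfold Xf
  split_ifs with h
  · exact h.symm
  · have h1 : ((1 : ℂ) - (θ:ℂ)/2) = ((1 - θ/2 : ℝ) : ℂ) := by push_cast; ring
    rw [h1, ← Complex.ofReal_cpow (Real.rpow_nonneg (Complex.abs.nonneg _) _)]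
    rw [← Real.rpow_mul (Complex.abs.nonneg _), hθ, mul_one_div, div_self (ne_of_gt hp),
      Real.rpow_one, pphase_mul_abs]

section Bilinear
variable {d : ℕ}

lemma Xf_abs_le {p : ℝ} (hp : 0 < p) (t : Fin d → ℂ) (k : Fin d) {z : ℂ}
    (h0 : 0 ≤ z.re) (h1 : z.re ≤ 1) :
    Complex.abs (Xf p t k z) ≤ max 1 (Complex.abs (t k) ^ p) := by
  rw [Xf_abs hp t k (by intro h; linarith)]
  set t' := Complex.abs (t k) ^ p with ht'
  have ht'0 : 0 ≤ t' := Real.rpow_nonneg (Complex.abs.nonneg _) _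
  rcases le_total t' 1 with h | h
  · exact le_trans (Real.rpow_le_one ht'0 h (by linarith)) (le_max_left _ _)
  · refine le_trans ?_ (le_max_right _ _)
    calc t' ^ (1 - z.re/2) ≤ t' ^ (1:ℝ) := Real.rpow_le_rpow_of_exponent_le h (by linarith)
    _ = t' := Real.rpow_one t'

lemma bilinear_bound (hd : 0 < d)
    (U : Matrix (Fin d) (Fin d) ℂ)
    (hUiso : ∀ x : Fin d → ℂ, ∑ l, Complex.normSq (U.mulVec x l) = ∑ k, Complex.normSq (x k))
    (hUent : ∀ l k, Complex.abs (U l k) ≤ ((d:ℝ)) ^ (-(1/2) : ℝ))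
    (c y : Fin d → ℂ) {p : ℝ} (hp1 : 1 < p) (hp2 : p < 2) :
    Complex.abs (∑ l, y l * U.mulVec c l) ≤
      (d:ℝ) ^ ((1/2 : ℝ) - 1/p) * (∑ k, Complex.abs (c k) ^ p) ^ (1/p)
        * (∑ l, Complex.abs (y l) ^ p) ^ (1/p) := by
  have hp0 : 0 < p := by linarith
  set A := ∑ k, Complex.abs (c k) ^ p with hA
  set B := ∑ l, Complex.abs (y l) ^ p with hB
  have hA0 : 0 ≤ A := Finset.sum_nonneg fun k _ => Real.rpow_nonneg (Complex.abs.nonneg _) _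
  have hB0 : 0 ≤ B := Finset.sum_nonneg fun l _ => Real.rpow_nonneg (Complex.abs.nonneg _) _
  set θ : ℝ := 2 - 2/p with hθdef
  have hθ0 : 0 < θ := by
    have : 2/p < 2 := by
      rw [div_lt_iff₀ hp0]; nlinarith
    simp only [hθdef]; linarith
  have hθ1 : θ < 1 := by
    have : 1 < 2/p := by rw [lt_div_iff₀ hp0]; linarith
    simp only [hθdef]; linarith
  have hθp : 1 - θ/2 = 1/p := by
    simp only [hθdef]; field_simp; ring
  -- the interpolating function
  set F : ℂ → ℂ := fun z => ∑ l, Xf p y l z * ∑ k, U l k * Xf p c k z with hF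
  have hFdiff : Differentiable ℂ F := by
    apply Differentiable.fun_sum
    intro l _
    exact (Xf_diff p y l).mul <| Differentiable.fun_sum fun k _ =>
      (Xf_diff p c k).const_mul _
  -- value at θ
  have hFθ : F (θ : ℂ) = ∑ l, y l * U.mulVec c l := by
    simp only [hF, Matrix.mulVec, dotProduct]
    refine Finset.sum_congr rfl fun l _ => ?_
    rw [Xf_at_real hp0 y l hθp]
    congr 1
    refine Finset.sum_congr rfl fun k _ => ?_
    rw [Xf_at_real hp0 c k hθp]
  -- edge bounds
  have edge0 : ∀ z ∈ Complex.re ⁻¹' {0}, ‖F z‖ ≤ (d:ℝ) ^ (-(1/2) : ℝ) * (A * B) := by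
    intro z hz
    have hzre : z.re = 0 := hz
    have habs : ∀ (t : Fin d → ℂ) (k : Fin d),
        Complex.abs (Xf p t k z) = Complex.abs (t k) ^ p := by
      intro t k
      rw [Xf_abs hp0 t k (by rw [hzre]; norm_num), hzre]
      norm_num
    calc ‖F z‖ ≤ ∑ l, Complex.abs (Xf p y l z * ∑ k, U l k * Xf p c k z) :=
          Complex.abs.sum_le _ _
      _ ≤ ∑ l, Complex.abs (y l) ^ p * ((d:ℝ) ^ (-(1/2) : ℝ) * A) := by
          apply Finset.sum_le_sum
          intro l _
          rw [_root_.map_mul, habs]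
          apply mul_le_mul_of_nonneg_left _ (Real.rpow_nonneg (Complex.abs.nonneg _) _)
          calc Complex.abs (∑ k, U l k * Xf p c k z) ≤ ∑ k, Complex.abs (U l k * Xf p c k z) :=
                Complex.abs.sum_le _ _
            _ ≤ ∑ k, (d:ℝ) ^ (-(1/2) : ℝ) * (Complex.abs (c k) ^ p) := by
                apply Finset.sum_le_sum
                intro k _
                rw [_root_.map_mul, habs]
                exact mul_le_mul_of_nonneg_right (hUent l k)
                  (Real.rpow_nonneg (Complex.abs.nonneg _) _)
            _ = (d:ℝ) ^ (-(1/2) : ℝ) * A := by rw [← Finset.mul_sum]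
      _ = (d:ℝ) ^ (-(1/2) : ℝ) * (A * B) := by rw [← Finset.sum_mul]; ring
  have edge1 : ∀ z ∈ Complex.re ⁻¹' {1}, ‖F z‖ ≤ Real.sqrt (A * B) := by
    intro z hz
    have hzre : z.re = 1 := hz
    have habs : ∀ (t : Fin d → ℂ) (k : Fin d),
        Complex.abs (Xf p t k z) ^ 2 = Complex.abs (t k) ^ p := by
      intro t k
      rw [Xf_abs hp0 t k (by rw [hzre]; norm_num), hzre]
      rw [← Real.rpow_natCast (_ ^ _) 2, ← Real.rpow_mul (Real.rpow_nonneg (Complex.abs.nonneg _) _)]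
      norm_num
    have hsum2 : ∑ k, Complex.abs (Xf p c k z) ^ 2 = A := by
      rw [hA]; congr 1; funext k; exact habs c k
    have hsumY : ∑ l, Complex.abs (Xf p y l z) ^ 2 = B := by
      rw [hB]; congr 1; funext l; exact habs y l
    have hW : ∑ l, Complex.abs (∑ k, U l k * Xf p c k z) ^ 2 = A := by
      have := hUiso (fun k => Xf p c k z)
      simp only [Matrix.mulVec, dotProduct] at this
      calc ∑ l, Complex.abs (∑ k, U l k * Xf p c k z) ^ 2
          = ∑ l, Complex.normSq (∑ k, U l k * Xf p c k z) := by
            congr 1; funext l; exact Complex.sq_abs _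
        _ = ∑ k, Complex.normSq (Xf p c k z) := this
        _ = ∑ k, Complex.abs (Xf p c k z) ^ 2 := by
            congr 1; funext k; exact (Complex.sq_abs _).symm
        _ = A := hsum2
    calc ‖F z‖ ≤ ∑ l, Complex.abs (Xf p y l z * ∑ k, U l k * Xf p c k z) :=
          Complex.abs.sum_le _ _
      _ = ∑ l, Complex.abs (Xf p y l z) * Complex.abs (∑ k, U l k * Xf p c k z) := by
          congr 1; funext l; exact _root_.map_mul _ _ _
      _ ≤ Real.sqrt (A * B) := by
          rw [Real.le_sqrt (Finset.sum_nonneg fun l _ => mul_nonneg (Complex.abs.nonneg _)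
            (Complex.abs.nonneg _)) (mul_nonneg hA0 hB0)]
          calc (∑ l, Complex.abs (Xf p y l z) * Complex.abs (∑ k, U l k * Xf p c k z)) ^ 2
              ≤ (∑ l, Complex.abs (Xf p y l z) ^ 2) *
                  (∑ l, Complex.abs (∑ k, U l k * Xf p c k z) ^ 2) :=
                Finset.sum_mul_sq_le_sq_mul_sq _ _ _
            _ = B * A := by rw [hsumY, hW]
            _ = A * B := mul_comm _ _
  -- boundedness
  have hBdd : BddAbove ((norm ∘ F) '' (Complex.HadamardThreeLines.verticalClosedStrip 0 1)) := by
    refine ⟨∑ l, max 1 (Complex.abs (y l) ^ p) *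
      ∑ k, (d:ℝ) ^ (-(1/2) : ℝ) * max 1 (Complex.abs (c k) ^ p), ?_⟩
    rintro x ⟨z, hz, rfl⟩
    have hz' : z.re ∈ Set.Icc (0:ℝ) 1 := hz
    calc ‖F z‖ ≤ ∑ l, Complex.abs (Xf p y l z * ∑ k, U l k * Xf p c k z) :=
          Complex.abs.sum_le _ _
      _ ≤ ∑ l, max 1 (Complex.abs (y l) ^ p) *
            ∑ k, (d:ℝ) ^ (-(1/2) : ℝ) * max 1 (Complex.abs (c k) ^ p) := by
          apply Finset.sum_le_sum
          intro l _
          rw [_root_.map_mul]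
          apply mul_le_mul (Xf_abs_le hp0 y l hz'.1 hz'.2) _ (Complex.abs.nonneg _)
            (le_trans zero_le_one (le_max_left _ _))
          calc Complex.abs (∑ k, U l k * Xf p c k z)
              ≤ ∑ k, Complex.abs (U l k * Xf p c k z) := Complex.abs.sum_le _ _
            _ ≤ ∑ k, (d:ℝ) ^ (-(1/2) : ℝ) * max 1 (Complex.abs (c k) ^ p) := by
                apply Finset.sum_le_sum
                intro k _
                rw [_root_.map_mul]
                exact mul_le_mul (hUent l k) (Xf_abs_le hp0 c k hz'.1 hz'.2)
                  (Complex.abs.nonneg _) (Real.rpow_nonneg (Nat.cast_nonneg d) _)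
  -- apply three lines
  have hmem : (θ : ℂ) ∈ Complex.HadamardThreeLines.verticalClosedStrip 0 1 := by
    simp only [Complex.HadamardThreeLines.verticalClosedStrip, Set.mem_preimage,
      Complex.ofReal_re, Set.mem_Icc]
    constructor <;> linarith
  have h3 := Complex.HadamardThreeLines.norm_le_interp_of_mem_verticalClosedStrip₀₁' F hmem
    (hFdiff.diffContOnCl) hBdd edge0 edge1
  rw [hFθ] at h3
  rw [Complex.ofReal_re] at h3
  rw [Complex.norm_eq_abs] at h3
  refine le_trans h3 (le_of_eq ?_)
  -- final rpow algebra
  have hd0 : (0:ℝ) ≤ (d:ℝ) := Nat.cast_nonneg d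
  have hAB : (0:ℝ) ≤ A * B := mul_nonneg hA0 hB0
  have e1 : -(1/2 : ℝ) * (1 - θ) = 1/2 - 1/p := by
    simp only [hθdef]; field_simp; ring
  have e2 : ((1:ℝ) - θ) + (1/2) * θ = 1/p := by
    simp only [hθdef]; field_simp; ring
  calc ((d:ℝ) ^ (-(1/2):ℝ) * (A * B)) ^ (1 - θ) * Real.sqrt (A * B) ^ θ
      = ((d:ℝ) ^ (-(1/2):ℝ)) ^ (1 - θ) * (A*B) ^ (1 - θ) * ((A*B) ^ ((1:ℝ)/2)) ^ θ := by
        rw [Real.mul_rpow (Real.rpow_nonneg hd0 _) hAB, Real.sqrt_eq_rpow]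
    _ = (d:ℝ) ^ ((1/2:ℝ) - 1/p) * ((A*B) ^ ((1:ℝ) - θ) * (A*B) ^ ((1/2) * θ)) := by
        rw [← Real.rpow_mul hd0, ← Real.rpow_mul hAB, e1, mul_assoc]
    _ = (d:ℝ) ^ ((1/2:ℝ) - 1/p) * (A*B) ^ ((1:ℝ)/p) := by
        rw [← Real.rpow_add' hAB (by rw [e2]; positivity)]
        rw [e2]
    _ = (d:ℝ) ^ ((1/2:ℝ) - 1/p) * ((∑ k, Complex.abs (c k) ^ p) ^ ((1:ℝ)/p)
          * (∑ l, Complex.abs (y l) ^ p) ^ ((1:ℝ)/p)) := by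
        rw [Real.mul_rpow hA0 hB0]
    _ = _ := by rw [← mul_assoc]

end Bilinear

section NormForm
variable {d : ℕ}

lemma star_pphase_mul (w : ℂ) : star (pphase w) * w = ((Complex.abs w : ℝ) : ℂ) := by
  unfold pphase
  split_ifs with h
  · simp [h]
  · have habs : ((Complex.abs w : ℝ) : ℂ) ≠ 0 := by simpa using h
    rw [star_div₀]
    rw [show star ((Complex.abs w : ℝ) : ℂ) = ((Complex.abs w : ℝ) : ℂ) from by
      rw [Complex.star_def, Complex.conj_ofReal]]
    rw [div_mul_eq_mul_div, mul_comm (star w) w, Complex.star_def, Complex.mul_conj,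
      Complex.normSq_eq_abs, div_eq_iff habs]
    push_cast
    ring

lemma lp_bound (hd : 0 < d)
    (U : Matrix (Fin d) (Fin d) ℂ)
    (hUiso : ∀ x : Fin d → ℂ, ∑ l, Complex.normSq (U.mulVec x l) = ∑ k, Complex.normSq (x k))
    (hUent : ∀ l k, Complex.abs (U l k) ≤ ((d:ℝ)) ^ (-(1/2) : ℝ))
    (c : Fin d → ℂ) {p : ℝ} (hp1 : 1 < p) (hp2 : p < 2) :
    (∑ l, Complex.abs (U.mulVec c l) ^ (p/(p-1))) ^ (1 - 1/p) ≤
      (d:ℝ) ^ ((1/2 : ℝ) - 1/p) * (∑ k, Complex.abs (c k) ^ p) ^ (1/p) := by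
  have hp0 : 0 < p := by linarith
  have hpm : 0 < p - 1 := by linarith
  set q : ℝ := p/(p-1) with hq
  have hq1 : 1 < q := by
    rw [hq, lt_div_iff₀ hpm]; linarith
  have hqp : p * (q - 1) = q := by
    rw [hq]; field_simp; ring
  set b : Fin d → ℂ := U.mulVec c with hb
  set y : Fin d → ℂ := fun l => star (pphase (b l)) * ((Complex.abs (b l) ^ (q-1) : ℝ) : ℂ)
    with hy
  have hyb : ∀ l, y l * b l = ((Complex.abs (b l) ^ q : ℝ) : ℂ) := by
    intro l
    rw [hy]
    calc star (pphase (b l)) * ((Complex.abs (b l) ^ (q-1) : ℝ) : ℂ) * b l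
        = ((Complex.abs (b l) ^ (q-1) : ℝ) : ℂ) * (star (pphase (b l)) * b l) := by ring
      _ = ((Complex.abs (b l) ^ (q-1) : ℝ) : ℂ) * ((Complex.abs (b l) : ℝ) : ℂ) :=
          by rw [star_pphase_mul]
      _ = ((Complex.abs (b l) ^ q : ℝ) : ℂ) := by
          rw [← Complex.ofReal_mul]
          congr 1
          nth_rewrite 2 [← Real.rpow_one (Complex.abs (b l))]
          rw [← Real.rpow_add' (Complex.abs.nonneg _) (by norm_num; linarith)]
          norm_num
  have hyabs : ∀ l, Complex.abs (y l) = Complex.abs (b l) ^ (q - 1) := by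
    intro l
    rw [hy, _root_.map_mul]
    by_cases h : b l = 0
    · rw [h]
      simp only [map_zero]
      rw [Real.zero_rpow (by linarith)]
      simp
    · rw [Complex.abs_ofReal, abs_of_nonneg (Real.rpow_nonneg (Complex.abs.nonneg _) _)]
      have : Complex.abs (star (pphase (b l))) = 1 := by
        rw [Complex.star_def, Complex.abs_conj]
        exact abs_pphase _ h
      rw [this, one_mul]
  have hyp : ∀ l, Complex.abs (y l) ^ p = Complex.abs (b l) ^ q := by
    intro l
    rw [hyabs l, ← Real.rpow_mul (Complex.abs.nonneg _)]
    congr 1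
    rw [mul_comm]
    exact hqp
  set Bq : ℝ := ∑ l, Complex.abs (b l) ^ q with hBq
  have hBq0 : 0 ≤ Bq := Finset.sum_nonneg fun l _ => Real.rpow_nonneg (Complex.abs.nonneg _) _
  have key := bilinear_bound hd U hUiso hUent c y hp1 hp2
  have hsum : Complex.abs (∑ l, y l * U.mulVec c l) = Bq := by
    have : ∑ l, y l * U.mulVec c l = ((Bq : ℝ) : ℂ) := by
      rw [hBq, Complex.ofReal_sum]
      exact Finset.sum_congr rfl fun l _ => hyb l
    rw [this, Complex.abs_ofReal, abs_of_nonneg hBq0]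
  have hyP : (∑ l, Complex.abs (y l) ^ p) = Bq := by
    rw [hBq]; exact Finset.sum_congr rfl fun l _ => hyp l
  rw [hsum, hyP] at key
  -- now key : Bq ≤ R * Bq^(1/p) with R := d^(...) * A^(1/p)
  set R : ℝ := (d:ℝ) ^ ((1/2 : ℝ) - 1/p) * (∑ k, Complex.abs (c k) ^ p) ^ (1/p) with hR
  have hR0 : 0 ≤ R := by
    apply mul_nonneg (Real.rpow_nonneg (Nat.cast_nonneg d) _)
    exact Real.rpow_nonneg (Finset.sum_nonneg fun k _ =>
      Real.rpow_nonneg (Complex.abs.nonneg _) _) _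
  have hp1' : (0:ℝ) < 1 - 1/p := by
    rw [sub_pos, div_lt_one hp0]; linarith
  rcases eq_or_lt_of_le hBq0 with h0 | h0
  · rw [← h0, Real.zero_rpow (ne_of_gt hp1')]
    exact hR0
  · have hstep : Bq ^ ((1:ℝ) - 1/p) = Bq * (Bq ^ (1/p))⁻¹ := by
      rw [Real.rpow_sub h0, Real.rpow_one, div_eq_mul_inv]
    rw [hstep]
    rw [mul_inv_le_iff₀ (Real.rpow_pos_of_pos h0 _)]
    rw [mul_assoc] at key ⊢
    exact key

end NormForm

section PureCore
variable {d : ℕ}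

/-- derivative of `α ↦ log (∑ P k ^ α)` at `α = 1` for a probability vector. -/
lemma hasDerivAt_log_sum_rpow (P : Fin d → ℝ) (hP0 : ∀ k, 0 ≤ P k) (hP1 : ∑ k, P k = 1) :
    HasDerivAt (fun α : ℝ => Real.log (∑ k, P k ^ α)) (∑ k, P k * Real.log (P k)) 1 := by
  have hsum : HasDerivAt (fun α : ℝ => ∑ k, P k ^ α) (∑ k, P k * Real.log (P k)) 1 := by
    apply HasDerivAt.fun_sum
    intro k _
    rcases eq_or_lt_of_le (hP0 k) with h | h
    · have hz : (fun α : ℝ => P k ^ α) =ᶠ[nhds 1] (fun _ => (0:ℝ)) := by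
        have hmem : {α : ℝ | α ≠ 0} ∈ nhds (1:ℝ) :=
          isOpen_ne.mem_nhds (by norm_num)
        filter_upwards [hmem] with α hα
        rw [← h, Real.zero_rpow hα]
      rw [show P k * Real.log (P k) = 0 by rw [← h]; ring]
      exact (Filter.EventuallyEq.hasDerivAt_iff hz).mpr (hasDerivAt_const 1 0)
    · have hexp : HasDerivAt (fun α : ℝ => Real.exp (Real.log (P k) * α))
          (P k * Real.log (P k)) 1 := by
        have h1 : HasDerivAt (fun α : ℝ => Real.log (P k) * α) (Real.log (P k)) 1 := by
          simpa using (hasDerivAt_id (1:ℝ)).const_mul (Real.log (P k))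
        have h2 := h1.exp
        rw [mul_one, Real.exp_log h] at h2
        simpa [mul_comm] using h2
      refine hexp.congr_of_eventuallyEq (Filter.Eventually.of_forall fun α => ?_)
      exact Real.rpow_def_of_pos h α
  have h1 : (∑ k, P k ^ (1:ℝ)) = 1 := by
    simp only [Real.rpow_one]
    exact hP1
  have h2 := hsum.log (by rw [h1]; norm_num)
  rw [h1, div_one] at h2
  exact h2

lemma pure_core (hd : 0 < d)
    (U : Matrix (Fin d) (Fin d) ℂ)
    (hUiso : ∀ x : Fin d → ℂ, ∑ l, Complex.normSq (U.mulVec x l) = ∑ k, Complex.normSq (x k))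
    (hUent : ∀ l k, Complex.abs (U l k) ≤ ((d:ℝ)) ^ (-(1/2) : ℝ))
    (c : Fin d → ℂ) (hc : ∑ k, Complex.normSq (c k) = 1) :
    Real.log d ≤ (-∑ k, Complex.normSq (c k) * Real.log (Complex.normSq (c k)))
      + (-∑ l, Complex.normSq (U.mulVec c l) * Real.log (Complex.normSq (U.mulVec c l))) := by
  set P : Fin d → ℝ := fun k => Complex.normSq (c k) with hP
  set Q : Fin d → ℝ := fun l => Complex.normSq (U.mulVec c l) with hQ
  have hP0 : ∀ k, 0 ≤ P k := fun k => Complex.normSq_nonneg _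
  have hQ0 : ∀ l, 0 ≤ Q l := fun l => Complex.normSq_nonneg _
  have hP1 : ∑ k, P k = 1 := hc
  have hQ1 : ∑ l, Q l = 1 := by rw [hQ]; rw [hUiso c]; exact hc
  -- absolute values as rpow of P
  have habsP : ∀ (r : ℝ), 0 < r → ∀ k, Complex.abs (c k) ^ r = P k ^ (r/2) := by
    intro r _ k
    rw [Complex.abs_apply, Real.sqrt_eq_rpow, ← Real.rpow_mul (Complex.normSq_nonneg _)]
    congr 1
    ring
  have habsQ : ∀ (r : ℝ), 0 < r → ∀ l, Complex.abs (U.mulVec c l) ^ r = Q l ^ (r/2) := by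
    intro r _ l
    rw [Complex.abs_apply, Real.sqrt_eq_rpow, ← Real.rpow_mul (Complex.normSq_nonneg _)]
    congr 1
    ring
  set gP : ℝ → ℝ := fun α => Real.log (∑ k, P k ^ α) with hgP
  set gQ : ℝ → ℝ := fun α => Real.log (∑ l, Q l ^ α) with hgQ
  -- positivity of the sums
  have hsumP : ∀ α : ℝ, 0 < ∑ k, P k ^ α := by
    intro α
    have : ∃ k : Fin d, P k ≠ 0 := by
      by_contra hcon
      push_neg at hcon
      rw [Finset.sum_eq_zero (fun k _ => hcon k)] at hP1
      norm_num at hP1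
    obtain ⟨k0, hk0⟩ := this
    apply Finset.sum_pos' (fun k _ => Real.rpow_nonneg (hP0 k) _)
    exact ⟨k0, Finset.mem_univ _, Real.rpow_pos_of_pos (lt_of_le_of_ne (hP0 k0) (Ne.symm hk0)) _⟩
  have hsumQ : ∀ α : ℝ, 0 < ∑ l, Q l ^ α := by
    intro α
    have : ∃ l : Fin d, Q l ≠ 0 := by
      by_contra hcon
      push_neg at hcon
      rw [Finset.sum_eq_zero (fun l _ => hcon l)] at hQ1
      norm_num at hQ1
    obtain ⟨l0, hl0⟩ := this
    apply Finset.sum_pos' (fun l _ => Real.rpow_nonneg (hQ0 l) _)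
    exact ⟨l0, Finset.mem_univ _, Real.rpow_pos_of_pos (lt_of_le_of_ne (hQ0 l0) (Ne.symm hl0)) _⟩
  -- Step 1 : the Riesz-Thorin consequence for each ε ∈ (0, 1/2)
  have step1 : ∀ ε : ℝ, ε ∈ Set.Ioo (0:ℝ) (1/2) →
      Real.log d ≤ (1/ε) * ((1+ε) * gP (1/(1+ε)) - (1-ε) * gQ (1/(1-ε))) := by
    intro ε hε
    obtain ⟨hε0, hε2⟩ := hε
    set p : ℝ := 2/(1+ε) with hpdef
    have hp1 : 1 < p := by
      rw [hpdef, lt_div_iff₀ (by linarith)]; linarith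
    have hp2 : p < 2 := by
      rw [hpdef, div_lt_iff₀ (by linarith)]; nlinarith
    have hp0 : 0 < p := by linarith
    have hkey := lp_bound hd U hUiso hUent c hp1 hp2
    have hqval : p/(p-1) = 2/(1-ε) := by
      rw [hpdef]
      field_simp
      ring
    have h1p : 1/p = (1+ε)/2 := by rw [hpdef]; field_simp
    have h1q : 1 - 1/p = (1-ε)/2 := by rw [h1p]; ring
    have hA : (∑ k, Complex.abs (c k) ^ p) = ∑ k, P k ^ (1/(1+ε)) := by
      refine Finset.sum_congr rfl fun k _ => ?_
      rw [habsP p hp0 k]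
      congr 1
      rw [hpdef]
      field_simp
    have h1me : (0:ℝ) < 1 - ε := by linarith
    have hB : (∑ l, Complex.abs (U.mulVec c l) ^ (p/(p-1))) = ∑ l, Q l ^ (1/(1-ε)) := by
      refine Finset.sum_congr rfl fun l _ => ?_
      rw [hqval, habsQ (2/(1-ε)) (by positivity) l]
      congr 1
      rw [div_div]
      rw [mul_comm]
      rw [eq_div_iff (ne_of_gt h1me)]
      field_simp
    rw [hA, hB, h1q, h1p] at hkey
    -- take logs
    have hlog := Real.log_le_log (Real.rpow_pos_of_pos (hsumQ _) _) hkey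
    rw [Real.log_rpow (hsumQ _), Real.log_mul (ne_of_gt (Real.rpow_pos_of_pos
      (by exact_mod_cast hd) _)) (ne_of_gt (Real.rpow_pos_of_pos (hsumP _) _)),
      Real.log_rpow (by exact_mod_cast hd), Real.log_rpow (hsumP _)] at hlog
    -- hlog : (1-ε)/2 * gQ(..) ≤ (1/2 - (1+ε)/2) * log d + (1+ε)/2 * gP(..)
    simp only [hgP, hgQ]
    rw [one_div, inv_mul_eq_div, le_div_iff₀ hε0]
    nlinarith [hlog]
  -- Step 2 : the limit ε → 0⁺
  set DP : ℝ := ∑ k, P k * Real.log (P k) with hDP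
  set DQ : ℝ := ∑ l, Q l * Real.log (Q l) with hDQ
  have hgP1 : gP 1 = 0 := by
    rw [hgP]
    simp only []
    rw [show (∑ k, P k ^ (1:ℝ)) = 1 by simp only [Real.rpow_one]; exact hP1]
    exact Real.log_one
  have hgQ1 : gQ 1 = 0 := by
    rw [hgQ]
    simp only []
    rw [show (∑ l, Q l ^ (1:ℝ)) = 1 by simp only [Real.rpow_one]; exact hQ1]
    exact Real.log_one
  have hderivP : HasDerivAt gP DP 1 := hasDerivAt_log_sum_rpow P hP0 hP1
  have hderivQ : HasDerivAt gQ DQ 1 := hasDerivAt_log_sum_rpow Q hQ0 hQ1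
  have hslopeP := hasDerivAt_iff_tendsto_slope.mp hderivP
  have hslopeQ := hasDerivAt_iff_tendsto_slope.mp hderivQ
  -- the two reparametrizations
  have hmapP : Filter.Tendsto (fun ε : ℝ => 1/(1+ε)) (nhdsWithin 0 (Set.Ioi 0))
      (nhdsWithin 1 {x | x ≠ 1}) := by
    rw [tendsto_nhdsWithin_iff]
    constructor
    · have hcont : ContinuousAt (fun ε : ℝ => 1/(1+ε)) 0 :=
        ContinuousAt.div continuousAt_const (continuousAt_const.add continuousAt_id)
          (by norm_num)
      have htend := hcont.tendsto.mono_left (nhdsWithin_le_nhds (s := Set.Ioi (0:ℝ)))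
      convert htend using 2
      norm_num
    · refine Filter.eventually_of_mem self_mem_nhdsWithin fun ε hε => ?_
      have hε0 : (0:ℝ) < ε := hε
      simp only [Set.mem_setOf_eq]
      intro hcon
      rcases eq_or_ne ((1:ℝ)+ε) 0 with h | h
      · rw [h] at hcon; norm_num at hcon
      · rw [div_eq_one_iff_eq h] at hcon
        linarith
  have hmapQ : Filter.Tendsto (fun ε : ℝ => 1/(1-ε)) (nhdsWithin 0 (Set.Ioi 0))
      (nhdsWithin 1 {x | x ≠ 1}) := by
    rw [tendsto_nhdsWithin_iff]
    constructor
    · have hcont : ContinuousAt (fun ε : ℝ => 1/(1-ε)) 0 :=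
        ContinuousAt.div continuousAt_const (continuousAt_const.sub continuousAt_id)
          (by norm_num)
      have htend := hcont.tendsto.mono_left (nhdsWithin_le_nhds (s := Set.Ioi (0:ℝ)))
      convert htend using 2
      norm_num
    · refine Filter.eventually_of_mem self_mem_nhdsWithin fun ε hε => ?_
      have hε0 : (0:ℝ) < ε := hε
      simp only [Set.mem_setOf_eq]
      intro hcon
      rcases eq_or_ne ((1:ℝ)-ε) 0 with h | h
      · rw [h] at hcon; norm_num at hcon
      · rw [div_eq_one_iff_eq h] at hcon
        linarith
  have htP : Filter.Tendsto (fun ε : ℝ => slope gP 1 (1/(1+ε)))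
      (nhdsWithin 0 (Set.Ioi 0)) (nhds DP) := hslopeP.comp hmapP
  have htQ : Filter.Tendsto (fun ε : ℝ => slope gQ 1 (1/(1-ε)))
      (nhdsWithin 0 (Set.Ioi 0)) (nhds DQ) := hslopeQ.comp hmapQ
  have hcomb : Filter.Tendsto (fun ε : ℝ => -(slope gP 1 (1/(1+ε))) - slope gQ 1 (1/(1-ε)))
      (nhdsWithin 0 (Set.Ioi 0)) (nhds (-DP - DQ)) := (htP.neg).sub htQ
  have hIoo : Set.Ioo (0:ℝ) (1/2) ∈ nhdsWithin (0:ℝ) (Set.Ioi 0) :=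
    Ioo_mem_nhdsGT_of_mem (by norm_num)
  have heq : ∀ᶠ ε in nhdsWithin (0:ℝ) (Set.Ioi 0),
      -(slope gP 1 (1/(1+ε))) - slope gQ 1 (1/(1-ε)) =
        (1/ε) * ((1+ε) * gP (1/(1+ε)) - (1-ε) * gQ (1/(1-ε))) := by
    filter_upwards [hIoo] with ε hε
    obtain ⟨hε0, hε2⟩ := hε
    rw [slope_def_field, slope_def_field, hgP1, hgQ1]
    have h1 : (1:ℝ) + ε ≠ 0 := by linarith
    have h2 : (1:ℝ) - ε ≠ 0 := by intro h; rw [sub_eq_zero] at h; linarith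
    have h3 : (1:ℝ)/(1+ε) - 1 = -(ε/(1+ε)) := by field_simp; ring
    have h4 : (1:ℝ)/(1-ε) - 1 = ε/(1-ε) := by field_simp; ring
    rw [h3, h4]
    have hne3 : -(ε/(1+ε)) ≠ 0 := by
      simp only [neg_ne_zero]
      positivity
    have hne4 : ε/(1-ε) ≠ 0 := by
      apply div_ne_zero (ne_of_gt hε0) h2
    field_simp
    ring
  have hfinal : Filter.Tendsto (fun ε : ℝ =>
      (1/ε) * ((1+ε) * gP (1/(1+ε)) - (1-ε) * gQ (1/(1-ε))))
      (nhdsWithin 0 (Set.Ioi 0)) (nhds (-DP - DQ)) := hcomb.congr' heq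
  have hev : ∀ᶠ ε in nhdsWithin (0:ℝ) (Set.Ioi 0),
      Real.log d ≤ (1/ε) * ((1+ε) * gP (1/(1+ε)) - (1-ε) * gQ (1/(1-ε))) := by
    filter_upwards [hIoo] with ε hε
    exact step1 ε hε
  have := ge_of_tendsto hfinal hev
  rw [hDP, hDQ] at this
  linarith

end PureCore

open Polynomial in
lemma charpoly_diag {d : ℕ} (v : Fin d → ℂ) :
    (Matrix.diagonal v).charpoly
      = (Multiset.map (fun a => X - C a) (Finset.univ.val.map v)).prod := by
  unfold Matrix.charpoly Matrix.charmatrix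
  rw [show (C.mapMatrix (Matrix.diagonal v)) = Matrix.diagonal (fun i => C (v i)) from by
    rw [RingHom.mapMatrix_apply, Matrix.diagonal_map (map_zero C)]]
  rw [Matrix.scalar_apply, Matrix.diagonal_sub, Matrix.det_diagonal]
  rw [Multiset.map_map, ← Finset.prod_eq_multiset_prod]
  rfl

open Polynomial in
lemma charpoly_unitary_conj {d : ℕ} (V B : Matrix (Fin d) (Fin d) ℂ) (hV : V * star V = 1) :
    (V * B * star V).charpoly = B.charpoly := by
  have hV' : star V * V = 1 := mul_eq_one_comm.mp hV
  set Φ : Matrix (Fin d) (Fin d) ℂ →+* Matrix (Fin d) (Fin d) ℂ[X] :=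
    (C : ℂ →+* ℂ[X]).mapMatrix with hΦ
  have h1 : Φ V * Φ (star V) = 1 := by
    rw [← _root_.map_mul, hV, _root_.map_one]
  have hscalar : (Matrix.scalar (Fin d)) (X : ℂ[X]) =
      Φ V * (Matrix.scalar (Fin d)) (X : ℂ[X]) * Φ (star V) := by
    rw [Matrix.scalar_apply, ← Matrix.smul_one_eq_diagonal, mul_smul_comm, smul_mul_assoc,
      mul_one, h1]
  unfold Matrix.charpoly
  have hcm : (V * B * star V).charmatrix
      = Φ V * B.charmatrix * Φ (star V) := by
    unfold Matrix.charmatrix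
    calc (Matrix.scalar (Fin d)) (X : ℂ[X]) - Φ (V * B * star V)
        = Φ V * (Matrix.scalar (Fin d)) (X : ℂ[X]) * Φ (star V)
            - Φ V * Φ B * Φ (star V) := by
          rw [← hscalar, _root_.map_mul, _root_.map_mul]
      _ = Φ V * ((Matrix.scalar (Fin d)) (X : ℂ[X]) - Φ B)
            * Φ (star V) := by
          rw [Matrix.mul_sub, Matrix.sub_mul]
  rw [hcm, Matrix.det_mul, Matrix.det_mul]
  have hdet : (Φ V).det * (Φ (star V)).det = 1 := by
    rw [← Matrix.det_mul, h1, Matrix.det_one]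
  calc (Φ V).det * B.charmatrix.det * (Φ (star V)).det
      = B.charmatrix.det * ((Φ V).det * (Φ (star V)).det) := by
        ring
    _ = B.charmatrix.det := by rw [hdet, mul_one]

lemma sum_f_eig_diagonal {d : ℕ} (r : Fin d → ℝ)
    (h : (Matrix.diagonal (fun k => ((r k : ℝ) : ℂ))).IsHermitian) (f : ℝ → ℝ) :
    ∑ i, f (h.eigenvalues i) = ∑ k, f (r k) := by
  have hVmem := (Matrix.mem_unitaryGroup_iff).mp (h.eigenvectorUnitary).2
  have hcp : (Matrix.diagonal (fun k => ((r k) : ℂ))).charpoly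
      = (Matrix.diagonal ((fun x : ℝ => (x : ℂ)) ∘ h.eigenvalues)).charpoly := by
    nth_rewrite 1 [h.spectral_theorem]
    exact charpoly_unitary_conj _ _ hVmem
  rw [charpoly_diag, charpoly_diag] at hcp
  have hmult := congrArg Polynomial.roots hcp
  rw [Polynomial.roots_multiset_prod_X_sub_C, Polynomial.roots_multiset_prod_X_sub_C] at hmult
  have hreal : Finset.univ.val.map h.eigenvalues = Finset.univ.val.map r := by
    apply Multiset.map_injective Complex.ofReal_injective
    rw [Multiset.map_map, Multiset.map_map]
    exact hmult.symm
  calc ∑ i, f (h.eigenvalues i) = ((Finset.univ.val.map h.eigenvalues).map f).sum := by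
        rw [Multiset.map_map, ← Finset.sum_eq_multiset_sum]; rfl
    _ = ((Finset.univ.val.map r).map f).sum := by rw [hreal]
    _ = ∑ k, f (r k) := by
        rw [Multiset.map_map, ← Finset.sum_eq_multiset_sum]; rfl

lemma dot_star_self (w : Fin d → ℂ) :
    dotProduct (star w) w = ((∑ l, Complex.normSq (w l) : ℝ) : ℂ) := by
  rw [dotProduct]
  push_cast
  refine Finset.sum_congr rfl fun l _ => ?_
  rw [Pi.star_apply, Complex.star_def, mul_comm, Complex.mul_conj]

lemma isometry_normSq (V : Matrix (Fin d) (Fin d) ℂ) (hV : Vᴴ * V = 1) (x : Fin d → ℂ) :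
    ∑ l, Complex.normSq (V.mulVec x l) = ∑ k, Complex.normSq (x k) := by
  have h1 : dotProduct (star (V.mulVec x)) (V.mulVec x) =
      dotProduct (star x) x := by
    rw [Matrix.star_mulVec, dotProduct_mulVec, Matrix.vecMul_vecMul, hV,
      Matrix.vecMul_one]
  rw [dot_star_self, dot_star_self] at h1
  exact_mod_cast h1

lemma measProb_eq_dot (v : Fin d → Fin d → ℂ) (σ : Matrix (Fin d) (Fin d) ℂ) (k : Fin d) :
    QI.measProb v σ k = (dotProduct (star (v k)) (σ.mulVec (v k))).re := by
  unfold QI.measProb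
  congr 1
  rw [dotProduct]
  refine Finset.sum_congr rfl fun a _ => ?_
  rw [Matrix.mulVec, dotProduct, Pi.star_apply, Finset.mul_sum]
  refine Finset.sum_congr rfl fun b _ => ?_
  ring

lemma measProb_nonneg (v : Fin d → Fin d → ℂ) (σ : Matrix (Fin d) (Fin d) ℂ)
    (hσ : σ.PosSemidef) (k : Fin d) : 0 ≤ QI.measProb v σ k := by
  rw [measProb_eq_dot]
  exact hσ.re_dotProduct_nonneg (v k)

lemma completeness (v : Fin d → Fin d → ℂ) (hv : QI.IsONB v) (a b : Fin d) :
    (∑ k, star (v k a) * v k b) = if a = b then 1 else 0 := by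
  -- from M * Mᴴ = 1 where M k a = star (v k a)
  set M : Matrix (Fin d) (Fin d) ℂ := Matrix.of fun k a => star (v k a) with hM
  have hMM : M * Mᴴ = 1 := by
    ext k l
    rw [Matrix.mul_apply, Matrix.one_apply]
    have := hv k l
    simp only [hM, Matrix.conjTranspose_apply, Matrix.of_apply, star_star]
    exact this
  have hMM' : Mᴴ * M = 1 := mul_eq_one_comm.mp hMM
  have := congrFun (congrFun hMM' b) a
  rw [Matrix.mul_apply, Matrix.one_apply] at this
  simp only [hM, Matrix.conjTranspose_apply, Matrix.of_apply, star_star] at this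
  -- this : ∑ k, v k b * star (v k a) = if b = a then 1 else 0
  rw [show (∑ k, star (v k a) * v k b) = ∑ k, v k b * star (v k a) from
    Finset.sum_congr rfl fun k _ => mul_comm _ _, this]
  by_cases h : a = b <;> simp [h, eq_comm]

lemma measProb_sum_one (v : Fin d → Fin d → ℂ) (hv : QI.IsONB v)
    (σ : Matrix (Fin d) (Fin d) ℂ) (htr : σ.trace = 1) :
    ∑ k, QI.measProb v σ k = 1 := by
  unfold QI.measProb
  rw [← Complex.re_sum]
  have key : (∑ k, ∑ a, ∑ b, star (v k a) * σ a b * v k b) = σ.trace := by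
    rw [Finset.sum_comm]
    calc ∑ a, ∑ k, ∑ b, star (v k a) * σ a b * v k b
        = ∑ a, ∑ b, σ a b * (∑ k, star (v k a) * v k b) := by
          refine Finset.sum_congr rfl fun a _ => ?_
          rw [Finset.sum_comm]
          refine Finset.sum_congr rfl fun b _ => ?_
          rw [Finset.mul_sum]
          refine Finset.sum_congr rfl fun k _ => ?_
          ring
      _ = ∑ a, σ a a := by
          refine Finset.sum_congr rfl fun a _ => ?_
          rw [Finset.sum_eq_single a]
          · rw [completeness v hv a a, if_pos rfl, mul_one]
          · intro b _ hb
            rw [completeness v hv a b, if_neg (Ne.symm hb), mul_zero]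
          · intro h
            exact absurd (Finset.mem_univ a) h
      _ = σ.trace := rfl
  rw [key, htr]
  norm_num


section Assembly
variable {d : ℕ}

lemma neg_sum_mul_log (P : Fin d → ℝ) :
    -∑ k, P k * Real.log (P k) = ∑ k, Real.negMulLog (P k) := by
  rw [← Finset.sum_neg_distrib]
  exact Finset.sum_congr rfl fun k _ => by rw [Real.negMulLog_eq_neg]

lemma vnEntropy_diag (r : Fin d → ℝ) :
    QI.vnEntropy (Matrix.diagonal fun k => ((r k : ℝ) : ℂ)) = ∑ k, Real.negMulLog (r k) := by
  have hherm : (Matrix.diagonal fun k => ((r k : ℝ) : ℂ)).IsHermitian := by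
    apply Matrix.isHermitian_diagonal_of_self_adjoint
    have hsa : star (fun k => ((r k : ℝ) : ℂ)) = fun k => ((r k : ℝ) : ℂ) := by
      funext k
      rw [Pi.star_apply, Complex.star_def, Complex.conj_ofReal]
    exact hsa
  unfold QI.vnEntropy
  rw [dif_pos hherm]
  rw [sum_f_eig_diagonal r hherm (fun x => x * Real.log x)]
  exact neg_sum_mul_log r

lemma jensen_negMulLog {n : ℕ} (lam : Fin n → ℝ) (hl0 : ∀ i, 0 ≤ lam i)
    (hl1 : ∑ i, lam i = 1) (q : Fin n → ℝ) (hq : ∀ i, 0 ≤ q i) :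
    ∑ i, lam i * Real.negMulLog (q i) ≤ Real.negMulLog (∑ i, lam i * q i) := by
  have := Real.concaveOn_negMulLog.le_map_sum (t := Finset.univ) (w := lam) (p := q)
    (fun i _ => hl0 i) hl1 (fun i _ => hq i)
  simpa [smul_eq_mul] using this

lemma onb_matrix_unitary (v : Fin d → Fin d → ℂ) (hv : QI.IsONB v) :
    (Matrix.of fun k a => star (v k a)) * (Matrix.of fun k a => star (v k a))ᴴ = 1 := by
  ext k l
  rw [Matrix.mul_apply, Matrix.one_apply]
  simpa [Matrix.conjTranspose_apply, Matrix.of_apply, star_star] using hv k l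

lemma measProb_spectral (v : Fin d → Fin d → ℂ) (σ : Matrix (Fin d) (Fin d) ℂ)
    (hherm : σ.IsHermitian) (k : Fin d) :
    QI.measProb v σ k = ∑ i, hherm.eigenvalues i * Complex.normSq
      (∑ a, star (v k a) * (hherm.eigenvectorUnitary : Matrix (Fin d) (Fin d) ℂ) a i) := by
  rw [measProb_eq_dot]
  set W : Matrix (Fin d) (Fin d) ℂ := (hherm.eigenvectorUnitary : Matrix (Fin d) (Fin d) ℂ)
    with hW
  set lam := hherm.eigenvalues with hlam
  have hdecomp : σ.mulVec (v k) =
      W.mulVec ((Matrix.diagonal (RCLike.ofReal ∘ lam)).mulVec ((star W).mulVec (v k))) := by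
    rw [Matrix.mulVec_mulVec, Matrix.mulVec_mulVec]
    exact congrArg (fun M => M *ᵥ v k) hherm.spectral_theorem
  rw [hdecomp, dotProduct_mulVec, dotProduct, Complex.re_sum]
  refine Finset.sum_congr rfl fun i _ => ?_
  have hterm : ((star (v k)) ᵥ* W) i = ∑ a, star (v k a) * W a i := by
    rw [Matrix.vecMul]
    rw [dotProduct]
    rfl
  have hterm2 : ((star W).mulVec (v k)) i = star (∑ a, star (v k a) * W a i) := by
    rw [Matrix.mulVec, dotProduct, star_sum]
    refine Finset.sum_congr rfl fun a _ => ?_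
    simp only [Matrix.star_apply, Pi.star_apply, star_mul', star_star]
    ring
  rw [Matrix.mulVec_diagonal]
  rw [hterm, hterm2]
  set m : ℂ := ∑ a, star (v k a) * W a i with hm
  have : m * ((RCLike.ofReal ∘ lam) i * star m) = ((lam i : ℝ) : ℂ) * (m * star m) := by
    have hofreal : (RCLike.ofReal ∘ lam) i = ((lam i : ℝ) : ℂ) := rfl
    rw [hofreal]; ring
  rw [this, Complex.star_def, Complex.mul_conj, ← Complex.ofReal_mul, Complex.ofReal_re]

lemma eig_sum_one (σ : Matrix (Fin d) (Fin d) ℂ) (hherm : σ.IsHermitian) (htr : σ.trace = 1) :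
    ∑ i, hherm.eigenvalues i = 1 := by
  set W : Matrix (Fin d) (Fin d) ℂ := (hherm.eigenvectorUnitary : Matrix (Fin d) (Fin d) ℂ)
    with hW
  have hWmem := (Matrix.mem_unitaryGroup_iff).mp (hherm.eigenvectorUnitary).2
  have hWW : star W * W = 1 := mul_eq_one_comm.mp hWmem
  have h1 : σ.trace = (Matrix.diagonal (RCLike.ofReal ∘ hherm.eigenvalues)
      : Matrix (Fin d) (Fin d) ℂ).trace := by
    nth_rewrite 1 [hherm.spectral_theorem]
    rw [Unitary.conjStarAlgAut_apply, Matrix.trace_mul_cycle, hWW, one_mul]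
  rw [htr, Matrix.trace_diagonal] at h1
  have h2 : ((1:ℝ) : ℂ) = ((∑ i, hherm.eigenvalues i : ℝ) : ℂ) := by
    push_cast
    exact h1
  exact_mod_cast h2.symm

lemma core_bound (hd : 0 < d) (v0 v1 : Fin d → Fin d → ℂ) (h0 : QI.IsONB v0)
    (h1 : QI.IsONB v1) (hmub : QI.IsMUB v0 v1)
    (σ : Matrix (Fin d) (Fin d) ℂ) (hσ : QI.IsDensity σ) :
    Real.log d ≤ (∑ k, Real.negMulLog (QI.measProb v0 σ k))
      + (∑ l, Real.negMulLog (QI.measProb v1 σ l)) := by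
  obtain ⟨hpsd, htr⟩ := hσ
  have hherm := hpsd.1
  set W : Matrix (Fin d) (Fin d) ℂ := (hherm.eigenvectorUnitary : Matrix (Fin d) (Fin d) ℂ)
    with hWdef
  set lam := hherm.eigenvalues with hlamdef
  set M0 : Matrix (Fin d) (Fin d) ℂ := Matrix.of fun k a => star (v0 k a) with hM0def
  set M1 : Matrix (Fin d) (Fin d) ℂ := Matrix.of fun k a => star (v1 k a) with hM1def
  have hM0 : M0 * M0ᴴ = 1 := onb_matrix_unitary v0 h0
  have hM1 : M1 * M1ᴴ = 1 := onb_matrix_unitary v1 h1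
  have hM0' : M0ᴴ * M0 = 1 := mul_eq_one_comm.mp hM0
  set U : Matrix (Fin d) (Fin d) ℂ := M1 * M0ᴴ with hUdef
  have hU1 : U * Uᴴ = 1 := by
    rw [hUdef, Matrix.conjTranspose_mul, Matrix.conjTranspose_conjTranspose]
    calc M1 * M0ᴴ * (M0 * M1ᴴ) = M1 * (M0ᴴ * M0) * M1ᴴ := by
          rw [Matrix.mul_assoc, Matrix.mul_assoc, Matrix.mul_assoc]
      _ = 1 := by rw [hM0', Matrix.mul_one, hM1]
  have hU1' : Uᴴ * U = 1 := mul_eq_one_comm.mp hU1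
  have hUiso : ∀ x : Fin d → ℂ, ∑ l, Complex.normSq (U.mulVec x l)
      = ∑ k, Complex.normSq (x k) := fun x => isometry_normSq U hU1' x
  have hd0 : (0:ℝ) ≤ (d:ℝ) := Nat.cast_nonneg d
  have hUent : ∀ l k, Complex.abs (U l k) ≤ ((d:ℝ)) ^ (-(1/2) : ℝ) := by
    intro l k
    have hUlk : U l k = ∑ a, star (v1 l a) * v0 k a := by
      rw [hUdef, Matrix.mul_apply]
      refine Finset.sum_congr rfl fun a _ => ?_
      simp only [hM1def, hM0def, Matrix.conjTranspose_apply, Matrix.of_apply, star_star]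
    have hns : Complex.normSq (U l k) = 1/d := by
      rw [hUlk]
      have hstar : (∑ a, star (v1 l a) * v0 k a) = star (∑ a, star (v0 k a) * v1 l a) := by
        rw [star_sum]
        refine Finset.sum_congr rfl fun a _ => ?_
        rw [star_mul', star_star]
        ring
      rw [hstar, Complex.star_def, Complex.normSq_conj]
      exact hmub k l
    rw [Complex.abs_apply, hns]
    rw [one_div, Real.sqrt_inv, Real.sqrt_eq_rpow, ← Real.rpow_neg hd0]
  have hWmem := (Matrix.mem_unitaryGroup_iff).mp (hherm.eigenvectorUnitary).2
  have hWW : Wᴴ * W = 1 := by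
    have h2 := mul_eq_one_comm.mp hWmem
    rwa [Matrix.star_eq_conjTranspose] at h2
  set ψ : Fin d → Fin d → ℂ := fun i a => W a i with hψdef
  have hψ : ∀ i, ∑ a, Complex.normSq (ψ i a) = 1 := by
    intro i
    have hdiag := congrFun (congrFun hWW i) i
    rw [Matrix.mul_apply, Matrix.one_apply_eq] at hdiag
    have h2 : (∑ a, (Complex.normSq (W a i) : ℂ)) = 1 := by
      rw [← hdiag]
      refine Finset.sum_congr rfl fun a _ => ?_
      rw [Matrix.conjTranspose_apply, Complex.star_def, mul_comm, Complex.mul_conj]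
    have h3 : ((∑ a, Complex.normSq (W a i) : ℝ) : ℂ) = ((1:ℝ) : ℂ) := by
      push_cast
      exact h2
    exact_mod_cast h3
  set c0 : Fin d → Fin d → ℂ := fun i => M0.mulVec (ψ i) with hc0def
  have hc0sum : ∀ i, ∑ k, Complex.normSq (c0 i k) = 1 := by
    intro i
    rw [hc0def]
    rw [isometry_normSq M0 hM0' (ψ i)]
    exact hψ i
  have hUc0 : ∀ i, U.mulVec (c0 i) = M1.mulVec (ψ i) := by
    intro i
    rw [hc0def]
    rw [Matrix.mulVec_mulVec]
    congr 1
    rw [hUdef, Matrix.mul_assoc, hM0', Matrix.mul_one]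
  have hcore : ∀ i, Real.log d ≤ (∑ k, Real.negMulLog (Complex.normSq (c0 i k)))
      + ∑ l, Real.negMulLog (Complex.normSq (M1.mulVec (ψ i) l)) := by
    intro i
    have hpc := pure_core hd U hUiso hUent (c0 i) (hc0sum i)
    rw [hUc0 i] at hpc
    rw [neg_sum_mul_log, neg_sum_mul_log] at hpc
    exact hpc
  have hP0 : ∀ k, QI.measProb v0 σ k = ∑ i, lam i * Complex.normSq (c0 i k) := by
    intro k
    rw [measProb_spectral v0 σ hherm k]
    refine Finset.sum_congr rfl fun i _ => ?_
    congr 1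
  have hP1 : ∀ l, QI.measProb v1 σ l = ∑ i, lam i * Complex.normSq (M1.mulVec (ψ i) l) := by
    intro l
    rw [measProb_spectral v1 σ hherm l]
    refine Finset.sum_congr rfl fun i _ => ?_
    congr 1
  have hlam0 : ∀ i, 0 ≤ lam i := fun i => hpsd.eigenvalues_nonneg i
  have hlam1 : ∑ i, lam i = 1 := eig_sum_one σ hherm htr
  have hJ0 : ∑ i, lam i * (∑ k, Real.negMulLog (Complex.normSq (c0 i k)))
      ≤ ∑ k, Real.negMulLog (QI.measProb v0 σ k) := by
    calc ∑ i, lam i * (∑ k, Real.negMulLog (Complex.normSq (c0 i k)))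
        = ∑ i, ∑ k, lam i * Real.negMulLog (Complex.normSq (c0 i k)) :=
          Finset.sum_congr rfl fun i _ => Finset.mul_sum _ _ _
      _ = ∑ k, ∑ i, lam i * Real.negMulLog (Complex.normSq (c0 i k)) := Finset.sum_comm
      _ ≤ ∑ k, Real.negMulLog (∑ i, lam i * Complex.normSq (c0 i k)) :=
          Finset.sum_le_sum fun k _ => jensen_negMulLog lam hlam0 hlam1 _
            (fun i => Complex.normSq_nonneg _)
      _ = ∑ k, Real.negMulLog (QI.measProb v0 σ k) :=
          Finset.sum_congr rfl fun k _ => by rw [hP0 k]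
  have hJ1 : ∑ i, lam i * (∑ l, Real.negMulLog (Complex.normSq (M1.mulVec (ψ i) l)))
      ≤ ∑ l, Real.negMulLog (QI.measProb v1 σ l) := by
    calc ∑ i, lam i * (∑ l, Real.negMulLog (Complex.normSq (M1.mulVec (ψ i) l)))
        = ∑ i, ∑ l, lam i * Real.negMulLog (Complex.normSq (M1.mulVec (ψ i) l)) :=
          Finset.sum_congr rfl fun i _ => Finset.mul_sum _ _ _
      _ = ∑ l, ∑ i, lam i * Real.negMulLog (Complex.normSq (M1.mulVec (ψ i) l)) :=
          Finset.sum_comm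
      _ ≤ ∑ l, Real.negMulLog (∑ i, lam i * Complex.normSq (M1.mulVec (ψ i) l)) :=
          Finset.sum_le_sum fun l _ => jensen_negMulLog lam hlam0 hlam1 _
            (fun i => Complex.normSq_nonneg _)
      _ = ∑ l, Real.negMulLog (QI.measProb v1 σ l) :=
          Finset.sum_congr rfl fun l _ => by rw [hP1 l]
  calc Real.log d = ∑ i, lam i * Real.log d := by rw [← Finset.sum_mul, hlam1, one_mul]
    _ ≤ ∑ i, lam i * ((∑ k, Real.negMulLog (Complex.normSq (c0 i k)))
          + ∑ l, Real.negMulLog (Complex.normSq (M1.mulVec (ψ i) l))) :=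
        Finset.sum_le_sum fun i _ => mul_le_mul_of_nonneg_left (hcore i) (hlam0 i)
    _ = (∑ i, lam i * (∑ k, Real.negMulLog (Complex.normSq (c0 i k))))
        + ∑ i, lam i * (∑ l, Real.negMulLog (Complex.normSq (M1.mulVec (ψ i) l))) := by
        rw [← Finset.sum_add_distrib]
        exact Finset.sum_congr rfl fun i _ => mul_add _ _ _
    _ ≤ _ := add_le_add hJ0 hJ1

end Assembly

end MUBaux
end MUBauxSection

/-- for measurements in two mutually unbiased bases,
`p₀ S(n₀(σ)) + p₁ S(n₁(σ)) ≥ min(p₀,p₁) · log d`. -/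
theorem mub_measurement_entropy_bound {d : ℕ}
    (v0 v1 : Fin d → Fin d → ℂ) (h0 : QI.IsONB v0) (h1 : QI.IsONB v1)
    (hmub : QI.IsMUB v0 v1)
    (σ : Matrix (Fin d) (Fin d) ℂ) (hσ : QI.IsDensity σ)
    (p0 p1 : ℝ) (hp0 : 0 ≤ p0) (hp1 : 0 ≤ p1) (hsum : p0 + p1 = 1) :
    min p0 p1 * Real.log d ≤
      p0 * QI.vnEntropy (QI.measChannel v0 σ) + p1 * QI.vnEntropy (QI.measChannel v1 σ) := by
  rcases Nat.eq_zero_or_pos d with hd0 | hd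
  · exfalso
    have htr := hσ.2
    subst hd0
    rw [Matrix.trace] at htr
    simp at htr
  · have hH0 : QI.vnEntropy (QI.measChannel v0 σ) = ∑ k, Real.negMulLog (QI.measProb v0 σ k) :=
      MUBaux.vnEntropy_diag (fun k => QI.measProb v0 σ k)
    have hH1 : QI.vnEntropy (QI.measChannel v1 σ) = ∑ k, Real.negMulLog (QI.measProb v1 σ k) :=
      MUBaux.vnEntropy_diag (fun k => QI.measProb v1 σ k)
    have hcore := MUBaux.core_bound hd v0 v1 h0 h1 hmub σ hσ
    have hnn : ∀ (v : Fin d → Fin d → ℂ), QI.IsONB v →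
        0 ≤ ∑ k, Real.negMulLog (QI.measProb v σ k) := by
      intro v hv
      apply Finset.sum_nonneg
      intro k _
      apply Real.negMulLog_nonneg (MUBaux.measProb_nonneg v σ hσ.1 k)
      have hsum := MUBaux.measProb_sum_one v hv σ hσ.2
      rw [← hsum]
      exact Finset.single_le_sum (fun j _ => MUBaux.measProb_nonneg v σ hσ.1 j)
        (Finset.mem_univ k)
    have h0nn := hnn v0 h0
    have h1nn := hnn v1 h1
    rw [hH0, hH1]
    rcases le_total p0 p1 with h | h
    · rw [min_eq_left h]
      have e1 := mul_le_mul_of_nonneg_left hcore hp0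
      nlinarith [mul_le_mul_of_nonneg_right h h1nn]
    · rw [min_eq_right h]
      have e1 := mul_le_mul_of_nonneg_left hcore hp1
      nlinarith [mul_le_mul_of_nonneg_right h h0nn]
end
end

section
/- Maassen–Uffink entropic uncertainty relation for MUBs: if {|v_k^{(0)}⟩} and {|v_k^{(1)}⟩} are mutually unbiased orthonormal bases of C^d, then for any density matrix σ, the Shannon entropies of the outcome distributions P_i(k) = ⟨v_k^{(i)}|σ|v_k^{(i)}⟩ satisfy H(P_0) + H(P_1) ≥ log d. -/
open Matrix Kronecker BigOperators ComplexOrder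

noncomputable section

namespace MUBProof

open Complex Finset Filter Real Topology

/-- Cauchy–Schwarz with square roots. -/
lemma cs_sqrt {d : ℕ} (f g : Fin d → ℝ) :
    ∑ i, f i * g i ≤ Real.sqrt (∑ i, f i ^ 2) * Real.sqrt (∑ i, g i ^ 2) := by
  have h := Finset.sum_mul_sq_le_sq_mul_sq Finset.univ f g
  calc ∑ i, f i * g i ≤ |∑ i, f i * g i| := le_abs_self _
    _ = Real.sqrt ((∑ i, f i * g i) ^ 2) := (Real.sqrt_sq_eq_abs _).symm
    _ ≤ Real.sqrt ((∑ i, f i ^ 2) * ∑ i, g i ^ 2) := Real.sqrt_le_sqrt h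
    _ = _ := Real.sqrt_mul (by positivity) _

/-- Collapse a double sum against a Kronecker delta. -/
lemma sum_collapse {d : ℕ} (f g : Fin d → ℂ) (h : Fin d → Fin d → ℂ)
    (hh : ∀ x y, h x y = if x = y then 1 else 0) :
    ∑ x, ∑ y, f x * g y * h x y = ∑ x, f x * g x := by
  simp only [hh, mul_ite, mul_one, mul_zero]
  simp

/-- Isometry property from column orthonormality (complex version). -/
lemma iso_sum {d : ℕ} (U : Matrix (Fin d) (Fin d) ℂ)
    (hcol : ∀ k k' : Fin d, ∑ l, star (U l k) * U l k' = if k = k' then 1 else 0)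
    (x : Fin d → ℂ) :
    ∑ l, Complex.normSq (∑ k, U l k * x k) = ∑ k, Complex.normSq (x k) := by
  have key : ((∑ l, Complex.normSq (∑ k, U l k * x k) : ℝ) : ℂ)
      = ((∑ k, Complex.normSq (x k) : ℝ) : ℂ) := by
    push_cast
    have e1 : ∀ z : ℂ, ((Complex.normSq z : ℝ) : ℂ) = star z * z := by
      intro z
      rw [Complex.star_def, mul_comm]
      exact (Complex.mul_conj z).symm
    simp_rw [e1]
    calc ∑ l, star (∑ k, U l k * x k) * (∑ k, U l k * x k)
        = ∑ l, ∑ k, ∑ k', (star (U l k) * star (x k)) * (U l k' * x k') := by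
          refine Finset.sum_congr rfl fun l _ => ?_
          rw [star_sum, Finset.sum_mul_sum]
          exact Finset.sum_congr rfl fun k _ => Finset.sum_congr rfl fun k' _ => by
            rw [star_mul']
      _ = ∑ k, ∑ k', (star (x k) * x k') * ∑ l, star (U l k) * U l k' := by
          rw [Finset.sum_comm]
          refine Finset.sum_congr rfl fun k _ => ?_
          rw [Finset.sum_comm]
          refine Finset.sum_congr rfl fun k' _ => ?_
          rw [Finset.mul_sum]
          exact Finset.sum_congr rfl fun l _ => by ring
      _ = ∑ k, star (x k) * x k := by
          refine Finset.sum_congr rfl fun k _ => ?_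
          simp only [hcol, mul_ite, mul_one, mul_zero]
          simp
  exact_mod_cast key

/-- Completeness relation for an orthonormal basis. -/
lemma onb_complete {d : ℕ} {v : Fin d → Fin d → ℂ} (h : QI.IsONB v) (x y : Fin d) :
    ∑ k, v k x * star (v k y) = if x = y then 1 else 0 := by
  classical
  let M : Matrix (Fin d) (Fin d) ℂ := Matrix.of fun k a => v k a
  have hMM : M * Mᴴ = 1 := by
    ext k l
    have h2 : star ((M * Mᴴ) k l) = if k = l then (1 : ℂ) else 0 := by
      have := h k l
      simp only [Matrix.mul_apply, Matrix.conjTranspose_apply, M, Matrix.of_apply] at *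
      rw [star_sum]
      simp_rw [star_mul', star_star]
      simpa [mul_comm] using this
    have h3 := congrArg star h2
    rw [star_star] at h3
    rw [h3, Matrix.one_apply]
    simp [apply_ite star]
  have hM2 : Mᴴ * M = 1 := mul_eq_one_comm.mp hMM
  have h4 : (Mᴴ * M) x y = if x = y then (1 : ℂ) else 0 := by rw [hM2, Matrix.one_apply]
  have h5 := congrArg star h4
  simp only [Matrix.mul_apply, Matrix.conjTranspose_apply, M, Matrix.of_apply] at h5
  rw [star_sum] at h5
  simp_rw [star_mul', star_star] at h5
  simpa [apply_ite star] using h5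

/-- measProb of a pure state is |⟨v_k|ψ⟩|². -/
lemma measProb_pure {d : ℕ} (v : Fin d → Fin d → ℂ) (ψ : Fin d → ℂ) (k : Fin d) :
    QI.measProb v (QI.pureState ψ) k = Complex.normSq (∑ x, star (v k x) * ψ x) := by
  unfold QI.measProb QI.pureState
  have e : ∑ x, ∑ y, star (v k x) * (Matrix.of fun a a' => ψ a * star (ψ a')) x y * v k y
      = (∑ x, star (v k x) * ψ x) * star (∑ y, star (v k y) * ψ y) := by
    rw [star_sum, Finset.sum_mul_sum]
    refine Finset.sum_congr rfl fun x _ => Finset.sum_congr rfl fun y _ => ?_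
    rw [star_mul', star_star]
    simp only [Matrix.of_apply]
    ring
  rw [e, Complex.star_def, Complex.mul_conj, Complex.ofReal_re]

lemma shannon_eq {d : ℕ} (f : Fin d → ℝ) :
    QI.shannon f = ∑ k, Real.negMulLog (f k) := by
  unfold QI.shannon
  rw [← Finset.sum_neg_distrib]
  exact Finset.sum_congr rfl fun k _ => by rw [Real.negMulLog, neg_mul]

/-- Concavity of the Shannon entropy. -/
lemma shannon_concave {d n : ℕ} (w : Fin n → ℝ) (hw : ∀ i, 0 ≤ w i) (hw1 : ∑ i, w i = 1)
    (P : Fin n → Fin d → ℝ) (hP : ∀ i k, 0 ≤ P i k) :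
    ∑ i, w i * QI.shannon (P i) ≤ QI.shannon (fun k => ∑ i, w i * P i k) := by
  have hk : ∀ k : Fin d, ∑ i, w i * Real.negMulLog (P i k)
      ≤ Real.negMulLog (∑ i, w i * P i k) := by
    intro k
    simpa [smul_eq_mul] using
      Real.concaveOn_negMulLog.le_map_sum (fun i _ => hw i) hw1
        (fun i _ => Set.mem_Ici.mpr (hP i k))
  calc ∑ i, w i * QI.shannon (P i) = ∑ k, ∑ i, w i * Real.negMulLog (P i k) := by
        rw [Finset.sum_comm]
        refine Finset.sum_congr rfl fun i _ => ?_
        rw [shannon_eq, Finset.mul_sum]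
    _ ≤ ∑ k, Real.negMulLog (∑ i, w i * P i k) := Finset.sum_le_sum fun k _ => hk k
    _ = _ := (shannon_eq _).symm

lemma interp_step {d : ℕ} (hd : 0 < d) {s : ℝ} (hs0 : 0 < s) (hs1 : s < 1)
    (a : Fin d → ℂ) (U : Matrix (Fin d) (Fin d) ℂ)
    (hU : ∀ l k, Complex.normSq (U l k) = 1 / d)
    (hiso : ∀ x : Fin d → ℂ,
      ∑ l, Complex.normSq (∑ k, U l k * x k) = ∑ k, Complex.normSq (x k))
    (ha : ∑ k, Complex.normSq (a k) = 1) :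
    (1 - s) * Real.log (∑ l, Complex.normSq (∑ k, U l k * a k) ^ (1 / (1 - s)))
      + s * Real.log d
      ≤ (1 + s) * Real.log (∑ k, Complex.normSq (a k) ^ (1 / (1 + s))) := by
  classical
  have h1s : (0:ℝ) < 1 - s := by linarith
  have h1s' : (0:ℝ) < 1 + s := by linarith
  have hdR : (0:ℝ) < d := by exact_mod_cast hd
  set b : Fin d → ℂ := fun l => ∑ k, U l k * a k with hbdef
  set p : Fin d → ℝ := fun k => Complex.normSq (a k) with hpdef
  set q : Fin d → ℝ := fun l => Complex.normSq (b l) with hqdef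
  show (1 - s) * Real.log (∑ l, q l ^ (1 / (1 - s))) + s * Real.log d
      ≤ (1 + s) * Real.log (∑ k, p k ^ (1 / (1 + s)))
  set A : ℝ := ∑ k, p k ^ (1 / (1 + s)) with hA
  set Q : ℝ := ∑ l, q l ^ (1 / (1 - s)) with hQ
  have hp0 : ∀ k, 0 ≤ p k := fun k => Complex.normSq_nonneg _
  have hq0 : ∀ l, 0 ≤ q l := fun l => Complex.normSq_nonneg _
  have hp1 : ∑ k, p k = 1 := ha
  have hq1 : ∑ l, q l = 1 := (hiso a).trans ha
  have hApos : 0 < A := by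
    obtain ⟨k0, -, hk0⟩ := Finset.exists_ne_zero_of_sum_ne_zero
      (by rw [hp1]; norm_num : ∑ k, p k ≠ 0)
    have hk0' : 0 < p k0 := lt_of_le_of_ne (hp0 k0) (Ne.symm hk0)
    calc (0:ℝ) < p k0 ^ (1 / (1 + s)) := Real.rpow_pos_of_pos hk0' _
      _ ≤ A := Finset.single_le_sum
          (fun k _ => Real.rpow_nonneg (hp0 k) _) (Finset.mem_univ k0)
  have hQpos : 0 < Q := by
    obtain ⟨l0, -, hl0⟩ := Finset.exists_ne_zero_of_sum_ne_zero
      (by rw [hq1]; norm_num : ∑ l, q l ≠ 0)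
    have hl0' : 0 < q l0 := lt_of_le_of_ne (hq0 l0) (Ne.symm hl0)
    calc (0:ℝ) < q l0 ^ (1 / (1 - s)) := Real.rpow_pos_of_pos hl0' _
      _ ≤ Q := Finset.single_le_sum
          (fun l _ => Real.rpow_nonneg (hq0 l) _) (Finset.mem_univ l0)
  -- analytic family
  set cp : Fin d → ℝ := fun k => Real.log (p k) / (2 * (1 + s)) with hcp
  set cq : Fin d → ℝ := fun l => Real.log (q l) / (2 * (1 - s)) with hcq
  set g0 : Fin d → ℂ → ℂ := fun k z =>
    if p k = 0 then 0 else
      (a k / ((‖a k‖ : ℝ) : ℂ)) * Complex.exp ((1 + z) * (cp k : ℂ)) with hg0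
  set g1 : Fin d → ℂ → ℂ := fun l z =>
    if q l = 0 then 0 else
      (star (b l) / ((‖b l‖ : ℝ) : ℂ)) * Complex.exp ((1 + z) * (cq l : ℂ)) with hg1
  set F : ℂ → ℂ := fun z => ∑ l, g1 l z * ∑ k, U l k * g0 k z with hFdef
  -- modulus computations
  have habs0 : ∀ (k : Fin d) (z : ℂ), 0 ≤ z.re →
      ‖g0 k z‖ = p k ^ ((1 + z.re) / (2 * (1 + s))) := by
    intro k z hz
    have hzpos : (0:ℝ) < 1 + z.re := by linarith
    have hexp : (0:ℝ) < (1 + z.re) / (2 * (1 + s)) := div_pos hzpos (by linarith)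
    by_cases hk : p k = 0
    · simp only [hg0, if_pos hk, map_zero, norm_zero]
      rw [hk, Real.zero_rpow (ne_of_gt hexp)]
    · have hpk : 0 < p k := lt_of_le_of_ne (hp0 k) (Ne.symm hk)
      have hak : a k ≠ 0 := by
        intro h
        exact hk (by simp [hpdef, h])
      have habs : ‖a k‖ ≠ 0 := norm_ne_zero_iff.mpr hak
      have hre : ((1 + z) * (cp k : ℂ)).re = (1 + z.re) * cp k := by
        simp [Complex.mul_re, Complex.add_re, Complex.add_im]
      simp only [hg0, if_neg hk, norm_mul, norm_div, Complex.norm_real, norm_norm,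
        Complex.norm_exp, hre, _root_.abs_of_nonneg (norm_nonneg (a k)), div_self habs, one_mul]
      rw [Real.rpow_def_of_pos hpk]
      congr 1
      simp only [hcp]
      field_simp
  have habs1 : ∀ (l : Fin d) (z : ℂ), 0 ≤ z.re →
      ‖g1 l z‖ = q l ^ ((1 + z.re) / (2 * (1 - s))) := by
    intro l z hz
    have hzpos : (0:ℝ) < 1 + z.re := by linarith
    have hexp : (0:ℝ) < (1 + z.re) / (2 * (1 - s)) := div_pos hzpos (by linarith)
    by_cases hl : q l = 0
    · simp only [hg1, if_pos hl, map_zero, norm_zero]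
      rw [hl, Real.zero_rpow (ne_of_gt hexp)]
    · have hql : 0 < q l := lt_of_le_of_ne (hq0 l) (Ne.symm hl)
      have hbl : b l ≠ 0 := by
        intro h
        exact hl (by simp [hqdef, h])
      have habsb : ‖b l‖ ≠ 0 := norm_ne_zero_iff.mpr hbl
      have hre : ((1 + z) * (cq l : ℂ)).re = (1 + z.re) * cq l := by
        simp [Complex.mul_re, Complex.add_re, Complex.add_im]
      have hstar : ‖star (b l)‖ = ‖b l‖ := by
        rw [Complex.star_def, Complex.norm_conj]
      simp only [hg1, if_neg hl, norm_mul, norm_div, Complex.norm_real, norm_norm,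
        Complex.norm_exp, hre, hstar, _root_.abs_of_nonneg (norm_nonneg (b l)),
        div_self habsb, one_mul]
      rw [Real.rpow_def_of_pos hql]
      congr 1
      simp only [hcq]
      field_simp
  have hsq0 : ∀ z : ℂ, 0 ≤ z.re →
      ∑ k, ‖g0 k z‖ ^ 2 = ∑ k, p k ^ ((1 + z.re) / (1 + s)) := by
    intro z hz
    refine Finset.sum_congr rfl fun k _ => ?_
    rw [habs0 k z hz, ← Real.rpow_natCast (p k ^ _) 2, ← Real.rpow_mul (hp0 k)]
    congr 1
    push_cast
    field_simp
  have hsq1 : ∀ z : ℂ, 0 ≤ z.re →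
      ∑ l, ‖g1 l z‖ ^ 2 = ∑ l, q l ^ ((1 + z.re) / (1 - s)) := by
    intro z hz
    refine Finset.sum_congr rfl fun l _ => ?_
    rw [habs1 l z hz, ← Real.rpow_natCast (q l ^ _) 2, ← Real.rpow_mul (hq0 l)]
    congr 1
    push_cast
    field_simp
  have habsU : ∀ l k, ‖U l k‖ = Real.sqrt (1 / d) := by
    intro l k
    rw [Complex.norm_def, hU]
  have htri : ∀ z : ℂ, ‖F z‖
      ≤ ∑ l, ‖g1 l z‖ * ‖∑ k, U l k * g0 k z‖ := by
    intro z
    simp only [hFdef]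
    refine (norm_sum_le _ _).trans (le_of_eq ?_)
    exact Finset.sum_congr rfl fun l _ => norm_mul _ _
  -- edge bounds
  have hedge0 : ∀ z : ℂ, z.re = 0 → ‖F z‖ ≤ Real.sqrt (Q * A) := by
    intro z hz
    have hz0 : 0 ≤ z.re := le_of_eq hz.symm
    have e2 : ∑ l, ‖g1 l z‖ ^ 2 = Q := by
      rw [hsq1 z hz0, hQ, hz]
      norm_num
    have e3 : ∑ l, ‖∑ k, U l k * g0 k z‖ ^ 2 = A := by
      calc ∑ l, ‖∑ k, U l k * g0 k z‖ ^ 2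
          = ∑ l, Complex.normSq (∑ k, U l k * g0 k z) := by
            simp [Complex.sq_norm]
        _ = ∑ k, Complex.normSq (g0 k z) := hiso _
        _ = ∑ k, ‖g0 k z‖ ^ 2 := by simp [Complex.sq_norm]
        _ = A := by rw [hsq0 z hz0, hA, hz]; norm_num
    calc ‖F z‖
        ≤ ∑ l, ‖g1 l z‖ * ‖∑ k, U l k * g0 k z‖ := htri z
      _ ≤ Real.sqrt (∑ l, ‖g1 l z‖ ^ 2)
            * Real.sqrt (∑ l, ‖∑ k, U l k * g0 k z‖ ^ 2) := cs_sqrt _ _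
      _ = Real.sqrt (Q * A) := by rw [e2, e3, ← Real.sqrt_mul hQpos.le]
  have hedge1 : ∀ z : ℂ, z.re = 1 → ‖F z‖ ≤ Real.sqrt (1 / d) * (Q * A) := by
    intro z hz
    have hz0 : 0 ≤ z.re := by rw [hz]; norm_num
    have hexpq : ((1:ℝ) + z.re) / (2 * (1 - s)) = 1 / (1 - s) := by
      rw [hz]
      rw [show ((1:ℝ) + 1) = 2 * 1 by norm_num, mul_div_mul_left _ _ (two_ne_zero)]
    have hexpp : ((1:ℝ) + z.re) / (2 * (1 + s)) = 1 / (1 + s) := by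
      rw [hz]
      rw [show ((1:ℝ) + 1) = 2 * 1 by norm_num, mul_div_mul_left _ _ (two_ne_zero)]
    calc ‖F z‖
        ≤ ∑ l, ‖g1 l z‖ * ‖∑ k, U l k * g0 k z‖ := htri z
      _ ≤ ∑ l, ‖g1 l z‖ * (Real.sqrt (1 / d) * A) := by
          refine Finset.sum_le_sum fun l _ => mul_le_mul_of_nonneg_left ?_ (norm_nonneg _)
          calc ‖∑ k, U l k * g0 k z‖
              ≤ ∑ k, ‖U l k‖ * ‖g0 k z‖ := by
                refine (norm_sum_le _ _).trans (le_of_eq ?_)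
                exact Finset.sum_congr rfl fun k _ => norm_mul _ _
            _ = Real.sqrt (1 / d) * A := by
                rw [hA, Finset.mul_sum]
                refine Finset.sum_congr rfl fun k _ => ?_
                rw [habsU l k, habs0 k z hz0, hexpp]
      _ = Q * (Real.sqrt (1 / d) * A) := by
          rw [← Finset.sum_mul]
          congr 1
          rw [hQ]
          refine Finset.sum_congr rfl fun l _ => ?_
          rw [habs1 l z hz0, hexpq]
      _ = Real.sqrt (1 / d) * (Q * A) := by ring
  -- boundedness on the strip
  have hq_le1 : ∀ l, q l ≤ 1 := by
    intro l
    rw [← hq1]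
    exact Finset.single_le_sum (fun l _ => hq0 l) (Finset.mem_univ l)
  have hp_le1 : ∀ k, p k ≤ 1 := by
    intro k
    rw [← hp1]
    exact Finset.single_le_sum (fun k _ => hp0 k) (Finset.mem_univ k)
  have hUle1 : ∀ l k, ‖U l k‖ ≤ 1 := by
    intro l k
    rw [habsU]
    exact sqrt_le_one.mpr ((div_le_one hdR).mpr (by exact_mod_cast hd))
  have hBdd : BddAbove ((norm ∘ F) '' Complex.HadamardThreeLines.verticalClosedStrip 0 1) := by
    refine ⟨(d : ℝ) * d, ?_⟩
    rintro x ⟨z, hz, rfl⟩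
    have hz0 : 0 ≤ z.re := hz.1
    simp only [Function.comp_apply]
    have hg0le : ∀ k, ‖g0 k z‖ ≤ 1 := by
      intro k
      rw [habs0 k z hz0]
      exact Real.rpow_le_one (hp0 k) (hp_le1 k) (by positivity)
    have hg1le : ∀ l, ‖g1 l z‖ ≤ 1 := by
      intro l
      rw [habs1 l z hz0]
      exact Real.rpow_le_one (hq0 l) (hq_le1 l) (by positivity)
    calc ‖F z‖
        ≤ ∑ l, ‖g1 l z‖ * ‖∑ k, U l k * g0 k z‖ := htri z
      _ ≤ ∑ l : Fin d, (d : ℝ) := by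
          refine Finset.sum_le_sum fun l _ => ?_
          have h2 : ‖∑ k, U l k * g0 k z‖ ≤ (d : ℝ) := by
            refine (norm_sum_le _ _).trans ?_
            calc ∑ k, ‖U l k * g0 k z‖ ≤ ∑ _k : Fin d, (1:ℝ) := by
                  refine Finset.sum_le_sum fun k _ => ?_
                  rw [norm_mul]
                  exact mul_le_one₀ (hUle1 l k) (norm_nonneg _) (hg0le k)
              _ = (d : ℝ) := by simp
          calc ‖g1 l z‖ * ‖∑ k, U l k * g0 k z‖
              ≤ 1 * (d : ℝ) := mul_le_mul (hg1le l) h2 (norm_nonneg _) zero_le_one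
            _ = (d : ℝ) := one_mul _
      _ = (d : ℝ) * d := by simp [Finset.sum_const, Finset.card_univ, nsmul_eq_mul]
  -- differentiability
  have hdiffF : Differentiable ℂ F := by
    rw [hFdef]
    refine Differentiable.fun_sum fun l _ => Differentiable.mul ?_ ?_
    · by_cases hl : q l = 0
      · simp only [hg1, if_pos hl]
        exact differentiable_const 0
      · simp only [hg1, if_neg hl]
        refine Differentiable.const_mul (Differentiable.cexp ?_) _
        exact (differentiable_const (1:ℂ)).add differentiable_id |>.mul (differentiable_const _)
    · refine Differentiable.fun_sum fun k _ => Differentiable.const_mul ?_ _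
      by_cases hk : p k = 0
      · simp only [hg0, if_pos hk]
        exact differentiable_const 0
      · simp only [hg0, if_neg hk]
        refine Differentiable.const_mul (Differentiable.cexp ?_) _
        exact (differentiable_const (1:ℂ)).add differentiable_id |>.mul (differentiable_const _)
  -- value at s
  have hg0s : ∀ k, g0 k (s : ℂ) = a k := by
    intro k
    by_cases hk : p k = 0
    · have hak : a k = 0 := by
        have : Complex.normSq (a k) = 0 := hk
        rwa [Complex.normSq_eq_zero] at this
      simp only [hg0, if_pos hk, hak]
    · have hpk : 0 < p k := lt_of_le_of_ne (hp0 k) (Ne.symm hk)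
      have hak : a k ≠ 0 := by
        intro h
        exact hk (by simp [hpdef, h])
      have habs : ((‖a k‖ : ℝ) : ℂ) ≠ 0 :=
        Complex.ofReal_ne_zero.mpr (norm_ne_zero_iff.mpr hak)
      simp only [hg0, if_neg hk]
      have hc : ((1:ℂ) + (s:ℂ)) * (cp k : ℂ) = (((1 + s) * cp k : ℝ) : ℂ) := by
        push_cast
        ring
      rw [hc, ← Complex.ofReal_exp]
      have hee : Real.exp ((1 + s) * cp k) = ‖a k‖ := by
        have h2 : (1 + s) * cp k = Real.log (p k) * (1/2 : ℝ) := by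
          simp only [hcp]
          field_simp
        rw [h2, ← Real.rpow_def_of_pos hpk, Complex.norm_def, Real.sqrt_eq_rpow]
      rw [hee]
      exact div_mul_cancel₀ _ habs
  have hSl : ∀ l, (∑ k, U l k * g0 k (s : ℂ)) = b l := by
    intro l
    rw [hbdef]
    exact Finset.sum_congr rfl fun k _ => by rw [hg0s]
  have hg1s : ∀ l, g1 l (s : ℂ) * b l = ((q l ^ (1 / (1 - s)) : ℝ) : ℂ) := by
    intro l
    by_cases hl : q l = 0
    · have hbl : b l = 0 := by
        have : Complex.normSq (b l) = 0 := hl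
        rwa [Complex.normSq_eq_zero] at this
      simp only [hg1, if_pos hl, hbl, mul_zero]
      rw [hl, Real.zero_rpow (ne_of_gt (one_div_pos.mpr h1s))]
      simp
    · have hql : 0 < q l := lt_of_le_of_ne (hq0 l) (Ne.symm hl)
      have hbl : b l ≠ 0 := by
        intro h
        exact hl (by simp [hqdef, h])
      have habs : ((‖b l‖ : ℝ) : ℂ) ≠ 0 :=
        Complex.ofReal_ne_zero.mpr (norm_ne_zero_iff.mpr hbl)
      simp only [hg1, if_neg hl]
      have hc : ((1:ℂ) + (s:ℂ)) * (cq l : ℂ) = (((1 + s) * cq l : ℝ) : ℂ) := by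
        push_cast
        ring
      rw [hc, ← Complex.ofReal_exp]
      have hmc : star (b l) / ((‖b l‖ : ℝ) : ℂ) * (Real.exp ((1 + s) * cq l) : ℂ) * b l
          = ((Complex.normSq (b l) : ℝ) : ℂ) * (Real.exp ((1 + s) * cq l) : ℂ)
              / ((‖b l‖ : ℝ) : ℂ) := by
        rw [Complex.star_def]
        have : b l * (starRingEnd ℂ) (b l) = ((Complex.normSq (b l) : ℝ) : ℂ) :=
          Complex.mul_conj (b l)
        field_simp
        rw [← this]
        ring
      rw [hmc]
      have hq' : ((Complex.normSq (b l) : ℝ) : ℂ) = ((q l : ℝ) : ℂ) := rfl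
      rw [hq', Complex.norm_def]
      rw [show ((Real.sqrt (Complex.normSq (b l)) : ℝ) : ℂ) = ((Real.sqrt (q l) : ℝ) : ℂ) from rfl]
      rw [← Complex.ofReal_mul, ← Complex.ofReal_div]
      congr 1
      -- real computation
      have hE : (1:ℝ) / (1 - s) = 1 + ((1 + s) / (2 * (1 - s)) - 1/2) := by
        field_simp
        ring
      have h2 : (1 + s) * cq l = Real.log (q l) * ((1 + s) / (2 * (1 - s))) := by
        simp only [hcq]
        ring
      rw [h2, ← Real.rpow_def_of_pos hql, Real.sqrt_eq_rpow, hE,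
        Real.rpow_add hql, Real.rpow_one, Real.rpow_sub hql]
      ring
  have hFs : F (s : ℂ) = ((Q : ℝ) : ℂ) := by
    simp only [hFdef]
    calc ∑ l, g1 l (s:ℂ) * ∑ k, U l k * g0 k (s:ℂ)
        = ∑ l, ((q l ^ (1 / (1 - s)) : ℝ) : ℂ) := by
          refine Finset.sum_congr rfl fun l _ => ?_
          rw [hSl l, hg1s l]
      _ = ((Q : ℝ) : ℂ) := by
          rw [hQ]
          push_cast
          rfl
  -- apply Hadamard three lines
  have hmem : (s : ℂ) ∈ Complex.HadamardThreeLines.verticalClosedStrip 0 1 := by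
    simp only [Complex.HadamardThreeLines.verticalClosedStrip, Set.mem_preimage,
      Complex.ofReal_re, Set.mem_Icc]
    exact ⟨hs0.le, hs1.le⟩
  have h3 := Complex.HadamardThreeLines.norm_le_interp_of_mem_verticalClosedStrip₀₁' F hmem
      (hdiffF.diffContOnCl) hBdd
      (fun z hz => by
        exact hedge0 z (by simpa using hz))
      (fun z hz => by
        exact hedge1 z (by simpa using hz))
  rw [hFs] at h3
  rw [Complex.norm_real, Real.norm_eq_abs, _root_.abs_of_pos hQpos, Complex.ofReal_re] at h3
  -- log algebra
  have hQA : (0:ℝ) < Q * A := mul_pos hQpos hApos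
  have hsqQA : (0:ℝ) < Real.sqrt (Q * A) := Real.sqrt_pos.mpr hQA
  have hsd : (0:ℝ) < Real.sqrt (1 / d) := Real.sqrt_pos.mpr (by positivity)
  have hM1 : (0:ℝ) < Real.sqrt (1 / d) * (Q * A) := mul_pos hsd hQA
  have hlog := Real.log_le_log hQpos h3
  have l1 : Real.log (Real.sqrt (Q * A) ^ (1 - s))
      = (1 - s) * ((Real.log Q + Real.log A) / 2) := by
    rw [Real.log_rpow hsqQA, Real.log_sqrt hQA.le,
      Real.log_mul (ne_of_gt hQpos) (ne_of_gt hApos)]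
  have l2 : Real.log ((Real.sqrt (1 / d) * (Q * A)) ^ s)
      = s * (-Real.log d / 2 + (Real.log Q + Real.log A)) := by
    rw [Real.log_rpow hM1, Real.log_mul (ne_of_gt hsd) (ne_of_gt hQA),
      Real.log_sqrt (by positivity), Real.log_mul (ne_of_gt hQpos) (ne_of_gt hApos),
      one_div, Real.log_inv]
  rw [Real.log_mul (ne_of_gt (Real.rpow_pos_of_pos hsqQA _))
      (ne_of_gt (Real.rpow_pos_of_pos hM1 _)), l1, l2] at hlog
  linarith

lemma renyi_slope {d : ℕ} (p : Fin d → ℝ) (hp : ∀ k, 0 ≤ p k) (hp1 : ∑ k, p k = 1) :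
    Filter.Tendsto (fun α : ℝ => Real.log (∑ k, p k ^ α) / (α - 1)) (𝓝[≠] (1:ℝ))
      (𝓝 (∑ k, p k * Real.log (p k))) := by
  have hterm : ∀ k : Fin d, HasDerivAt (fun α : ℝ => p k ^ α) (p k * Real.log (p k)) 1 := by
    intro k
    rcases eq_or_lt_of_le (hp k) with h0 | hpos
    · have h1 : (fun α : ℝ => p k ^ α) =ᶠ[𝓝 (1:ℝ)] fun _ => (0:ℝ) := by
        filter_upwards [eventually_gt_nhds (by norm_num : (0:ℝ) < 1)] with α hα
        rw [← h0, Real.zero_rpow (ne_of_gt hα)]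
      have h2 := (hasDerivAt_const (1:ℝ) (0:ℝ)).congr_of_eventuallyEq h1
      have h3 : p k * Real.log (p k) = 0 := by rw [← h0]; simp
      rw [h3]
      exact h2
    · have := (Real.hasStrictDerivAt_const_rpow hpos (1:ℝ)).hasDerivAt
      simpa [Real.rpow_one] using this
  have hg : HasDerivAt (fun α : ℝ => ∑ k, p k ^ α) (∑ k, p k * Real.log (p k)) 1 :=
    HasDerivAt.fun_sum fun k _ => hterm k
  have hsum1 : (∑ k, p k ^ (1:ℝ)) = 1 := by
    simp_rw [Real.rpow_one]
    exact hp1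
  have hlog : HasDerivAt (fun α : ℝ => Real.log (∑ k, p k ^ α))
      (∑ k, p k * Real.log (p k)) 1 := by
    have := hg.log (by rw [hsum1]; norm_num)
    simpa [hsum1, hp1] using this
  have hs := hasDerivAt_iff_tendsto_slope.mp hlog
  refine Filter.Tendsto.congr' ?_ hs
  filter_upwards with α
  rw [slope_def_field, hsum1, Real.log_one, sub_zero]

lemma pure_core {d : ℕ} (hd : 0 < d) (a : Fin d → ℂ) (U : Matrix (Fin d) (Fin d) ℂ)
    (hU : ∀ l k, Complex.normSq (U l k) = 1 / d)
    (hcol : ∀ k k' : Fin d, ∑ l, star (U l k) * U l k' = if k = k' then 1 else 0)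
    (ha : ∑ k, Complex.normSq (a k) = 1) :
    Real.log d ≤ QI.shannon (fun k => Complex.normSq (a k))
      + QI.shannon (fun l => Complex.normSq (∑ k, U l k * a k)) := by
  have hiso := iso_sum U hcol
  set p : Fin d → ℝ := fun k => Complex.normSq (a k) with hp
  set q : Fin d → ℝ := fun l => Complex.normSq (∑ k, U l k * a k) with hq
  have hp0 : ∀ k, 0 ≤ p k := fun k => Complex.normSq_nonneg _
  have hq0 : ∀ l, 0 ≤ q l := fun l => Complex.normSq_nonneg _
  have hp1 : ∑ k, p k = 1 := ha
  have hq1 : ∑ l, q l = 1 := (hiso a).trans ha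
  have Rp := renyi_slope p hp0 hp1
  have Rq := renyi_slope q hq0 hq1
  have hmapP : Filter.Tendsto (fun s : ℝ => 1 / (1 + s)) (𝓝[>] (0:ℝ)) (𝓝[≠] (1:ℝ)) := by
    apply tendsto_nhdsWithin_of_tendsto_nhds_of_eventually_within
    · have h1 : Filter.Tendsto (fun s : ℝ => 1 / (1 + s)) (𝓝 (0:ℝ)) (𝓝 (1 / (1 + 0))) :=
        Filter.Tendsto.div tendsto_const_nhds (tendsto_const_nhds.add tendsto_id) (by norm_num)
      rw [show (1:ℝ) / (1 + 0) = 1 by norm_num] at h1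
      exact h1.mono_left nhdsWithin_le_nhds
    · filter_upwards [self_mem_nhdsWithin] with s hs
      have hs' : (0:ℝ) < s := hs
      have h2 : 1 / (1 + s) < 1 := by
        rw [div_lt_one (by linarith)]
        linarith
      exact Set.mem_compl_singleton_iff.mpr (ne_of_lt h2)
  have hmapQ : Filter.Tendsto (fun s : ℝ => 1 / (1 - s)) (𝓝[>] (0:ℝ)) (𝓝[≠] (1:ℝ)) := by
    apply tendsto_nhdsWithin_of_tendsto_nhds_of_eventually_within
    · have h1 : Filter.Tendsto (fun s : ℝ => 1 / (1 - s)) (𝓝 (0:ℝ)) (𝓝 (1 / (1 - 0))) :=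
        Filter.Tendsto.div tendsto_const_nhds (tendsto_const_nhds.sub tendsto_id) (by norm_num)
      rw [show (1:ℝ) / (1 - 0) = 1 by norm_num] at h1
      exact h1.mono_left nhdsWithin_le_nhds
    · filter_upwards [Ioo_mem_nhdsGT_of_mem (Set.mem_Ico.mpr ⟨le_refl (0:ℝ), zero_lt_one⟩)]
        with s hs
      have h2 : 1 < 1 / (1 - s) := by
        rw [lt_div_iff₀ (by linarith [hs.2] : (0:ℝ) < 1 - s)]
        linarith [hs.1]
      exact Set.mem_compl_singleton_iff.mpr (ne_of_gt h2)
  have TP : Filter.Tendsto (fun s : ℝ => (1 + s) * Real.log (∑ k, p k ^ (1 / (1 + s))) / s)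
      (𝓝[>] (0:ℝ)) (𝓝 (-∑ k, p k * Real.log (p k))) := by
    refine Filter.Tendsto.congr' ?_ ((Rp.comp hmapP).neg)
    filter_upwards [self_mem_nhdsWithin] with s hs
    have hs0 : (0:ℝ) < s := hs
    have h1s : (1:ℝ) + s ≠ 0 := by positivity
    simp only [Function.comp_apply]
    have hsne : s ≠ 0 := ne_of_gt hs0
    field_simp
    ring_nf
    field_simp
  have TQ : Filter.Tendsto (fun s : ℝ => (1 - s) * Real.log (∑ l, q l ^ (1 / (1 - s))) / s)
      (𝓝[>] (0:ℝ)) (𝓝 (∑ l, q l * Real.log (q l))) := by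
    refine Filter.Tendsto.congr' ?_ (Rq.comp hmapQ)
    filter_upwards [Ioo_mem_nhdsGT_of_mem (Set.mem_Ico.mpr ⟨le_refl (0:ℝ), zero_lt_one⟩)]
      with s hs
    have hs0 : (0:ℝ) < s := hs.1
    have h1s : (1:ℝ) - s ≠ 0 := by
      have := hs.2
      intro h
      linarith [h]
    simp only [Function.comp_apply]
    have hsne : s ≠ 0 := ne_of_gt hs0
    field_simp
    ring_nf
    field_simp
  have Tboth : Filter.Tendsto (fun s : ℝ =>
      (1 + s) * Real.log (∑ k, p k ^ (1 / (1 + s))) / s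
        - (1 - s) * Real.log (∑ l, q l ^ (1 / (1 - s))) / s)
      (𝓝[>] (0:ℝ)) (𝓝 (QI.shannon p + QI.shannon q)) := by
    have h := TP.sub TQ
    have : QI.shannon p + QI.shannon q
        = -∑ k, p k * Real.log (p k) - ∑ l, q l * Real.log (q l) := by
      unfold QI.shannon
      ring
    rw [this]
    exact h
  have hev : ∀ᶠ s : ℝ in 𝓝[>] (0:ℝ), Real.log d ≤
      (1 + s) * Real.log (∑ k, p k ^ (1 / (1 + s))) / s
        - (1 - s) * Real.log (∑ l, q l ^ (1 / (1 - s))) / s := by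
    filter_upwards [Ioo_mem_nhdsGT_of_mem (Set.mem_Ico.mpr ⟨le_refl (0:ℝ), zero_lt_one⟩)]
      with s hs
    have hineq : (1 - s) * Real.log (∑ l, q l ^ (1 / (1 - s))) + s * Real.log d
        ≤ (1 + s) * Real.log (∑ k, p k ^ (1 / (1 + s))) :=
      interp_step hd hs.1 hs.2 a U hU hiso ha
    have hs0 : (0:ℝ) < s := hs.1
    rw [div_sub_div_same, le_div_iff₀ hs0]
    linarith
  exact ge_of_tendsto Tboth hev

lemma measProb_decomp {d n : ℕ} (v : Fin d → Fin d → ℂ) (σ : Matrix (Fin d) (Fin d) ℂ)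
    (w : Fin n → ℝ) (u : Fin n → Fin d → ℂ)
    (hσ : ∀ x y, σ x y = ∑ i, ((w i : ℝ) : ℂ) * (u i x * star (u i y))) (k : Fin d) :
    QI.measProb v σ k = ∑ i, w i * QI.measProb v (QI.pureState (u i)) k := by
  unfold QI.measProb QI.pureState
  have e : (∑ x, ∑ y, star (v k x) * σ x y * v k y)
      = ∑ i, ((w i : ℝ) : ℂ)
          * (∑ x, ∑ y, star (v k x) * (Matrix.of fun a a' => u i a * star (u i a')) x y * v k y) := by
    simp only [Matrix.of_apply]
    calc (∑ x, ∑ y, star (v k x) * σ x y * v k y)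
        = ∑ x, ∑ y, ∑ i, ((w i : ℝ) : ℂ)
            * (star (v k x) * (u i x * star (u i y)) * v k y) := by
          refine Finset.sum_congr rfl fun x _ => Finset.sum_congr rfl fun y _ => ?_
          rw [hσ x y, Finset.mul_sum, Finset.sum_mul]
          exact Finset.sum_congr rfl fun i _ => by ring
      _ = ∑ i, ∑ x, ∑ y, ((w i : ℝ) : ℂ)
            * (star (v k x) * (u i x * star (u i y)) * v k y) := by
          have hswap : ∀ x : Fin d, ∑ y, ∑ i, ((w i : ℝ) : ℂ)
              * (star (v k x) * (u i x * star (u i y)) * v k y)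
              = ∑ i, ∑ y, ((w i : ℝ) : ℂ)
              * (star (v k x) * (u i x * star (u i y)) * v k y) := fun x => Finset.sum_comm
          simp_rw [hswap]
          exact Finset.sum_comm
      _ = ∑ i, ((w i : ℝ) : ℂ)
            * ∑ x, ∑ y, star (v k x) * (u i x * star (u i y)) * v k y := by
          refine Finset.sum_congr rfl fun i _ => ?_
          rw [Finset.mul_sum]
          refine Finset.sum_congr rfl fun x _ => ?_
          rw [Finset.mul_sum]
  rw [e, Complex.re_sum]
  exact Finset.sum_congr rfl fun i _ => Complex.re_ofReal_mul _ _

lemma pure_bound {d : ℕ} (hd : 0 < d) (v0 v1 : Fin d → Fin d → ℂ)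
    (h0 : QI.IsONB v0) (h1 : QI.IsONB v1) (hmub : QI.IsMUB v0 v1)
    (ψ : Fin d → ℂ) (hψ : ∑ x, Complex.normSq (ψ x) = 1) :
    Real.log d ≤ QI.shannon (QI.measProb v0 (QI.pureState ψ))
      + QI.shannon (QI.measProb v1 (QI.pureState ψ)) := by
  classical
  set U : Matrix (Fin d) (Fin d) ℂ :=
    Matrix.of (fun l k => ∑ x, star (v1 l x) * v0 k x) with hUdef
  set a : Fin d → ℂ := fun k => ∑ x, star (v0 k x) * ψ x with hadef
  have hUlk : ∀ l k, U l k = ∑ x, star (v1 l x) * v0 k x := fun l k => rfl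
  have hUn : ∀ l k, Complex.normSq (U l k) = 1 / d := by
    intro l k
    rw [hUlk]
    have hstar : (∑ x, star (v1 l x) * v0 k x) = star (∑ x, star (v0 k x) * v1 l x) := by
      rw [star_sum]
      refine Finset.sum_congr rfl fun x _ => ?_
      rw [star_mul', star_star]
      ring
    rw [hstar, Complex.star_def, Complex.normSq_conj]
    exact hmub k l
  have hb : ∀ l, (∑ x, star (v1 l x) * ψ x) = ∑ k, U l k * a k := by
    intro l
    have e : ∑ k, U l k * a k = ∑ y, star (v1 l y) * ψ y := by
      calc ∑ k, U l k * a k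
          = ∑ k, (∑ y, star (v1 l y) * v0 k y) * (∑ x, star (v0 k x) * ψ x) := rfl
        _ = ∑ k, ∑ y, ∑ x, (star (v1 l y) * v0 k y) * (star (v0 k x) * ψ x) := by
            refine Finset.sum_congr rfl fun k _ => ?_
            rw [Finset.sum_mul_sum]
        _ = ∑ y, ∑ x, ∑ k, (star (v1 l y) * v0 k y) * (star (v0 k x) * ψ x) := by
            rw [Finset.sum_comm]
            exact Finset.sum_congr rfl fun y _ => Finset.sum_comm
        _ = ∑ y, ∑ x, star (v1 l y) * ψ x * (∑ k, v0 k y * star (v0 k x)) := by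
            refine Finset.sum_congr rfl fun y _ => Finset.sum_congr rfl fun x _ => ?_
            rw [Finset.mul_sum]
            exact Finset.sum_congr rfl fun k _ => by ring
        _ = ∑ y, star (v1 l y) * ψ y := sum_collapse _ _ _ (onb_complete h0)
    exact e.symm
  have hcol : ∀ k k', ∑ l, star (U l k) * U l k' = if k = k' then 1 else 0 := by
    intro k k'
    calc ∑ l, star (U l k) * U l k'
        = ∑ l, (∑ y, v1 l y * star (v0 k y)) * (∑ x, star (v1 l x) * v0 k' x) := by
          refine Finset.sum_congr rfl fun l _ => ?_
          rw [hUlk, hUlk, star_sum]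
          congr 1
          refine Finset.sum_congr rfl fun y _ => ?_
          rw [star_mul', star_star]
      _ = ∑ l, ∑ y, ∑ x, (v1 l y * star (v0 k y)) * (star (v1 l x) * v0 k' x) := by
          refine Finset.sum_congr rfl fun l _ => ?_
          rw [Finset.sum_mul_sum]
      _ = ∑ y, ∑ x, star (v0 k y) * v0 k' x * (∑ l, v1 l y * star (v1 l x)) := by
          rw [Finset.sum_comm]
          refine Finset.sum_congr rfl fun y _ => ?_
          rw [Finset.sum_comm]
          refine Finset.sum_congr rfl fun x _ => ?_
          rw [Finset.mul_sum]
          exact Finset.sum_congr rfl fun l _ => by ring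
      _ = ∑ y, star (v0 k y) * v0 k' y := sum_collapse _ _ _ (onb_complete h1)
      _ = if k = k' then 1 else 0 := h0 k k'
  have ha1 : ∑ k, Complex.normSq (a k) = 1 := by
    have hcolW : ∀ x x' : Fin d,
        ∑ k, star ((Matrix.of fun k x => star (v0 k x)) k x)
          * (Matrix.of fun k x => star (v0 k x)) k x' = if x = x' then 1 else 0 := by
      intro x x'
      simp only [Matrix.of_apply, star_star]
      exact onb_complete h0 x x'
    have h2 := iso_sum (Matrix.of fun k x => star (v0 k x)) hcolW ψ
    simp only [Matrix.of_apply] at h2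
    exact h2.trans hψ
  have e0 : QI.measProb v0 (QI.pureState ψ) = fun k => Complex.normSq (a k) := by
    funext k
    rw [measProb_pure]
  have e1 : QI.measProb v1 (QI.pureState ψ)
      = fun l => Complex.normSq (∑ k, U l k * a k) := by
    funext l
    rw [measProb_pure, hb l]
  rw [e0, e1]
  exact pure_core hd a U hUn hcol ha1

end MUBProof

/-- Maassen–Uffink entropic uncertainty relation for two mutually unbiased
bases: `H(P₀) + H(P₁) ≥ log d`. -/
theorem maassen_uffink_mub {d : ℕ}
    (v0 v1 : Fin d → Fin d → ℂ) (h0 : QI.IsONB v0) (h1 : QI.IsONB v1)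
    (hmub : QI.IsMUB v0 v1)
    (σ : Matrix (Fin d) (Fin d) ℂ) (hσ : QI.IsDensity σ) :
    Real.log d ≤ QI.shannon (QI.measProb v0 σ) + QI.shannon (QI.measProb v1 σ) := by
  classical
  obtain ⟨hps, htr⟩ := hσ
  rcases Nat.eq_zero_or_pos d with hd0 | hd
  · exfalso
    subst hd0
    simp [Matrix.trace] at htr
  · have hH : σ.IsHermitian := hps.1
    set V : Matrix (Fin d) (Fin d) ℂ :=
      (hH.eigenvectorUnitary : Matrix (Fin d) (Fin d) ℂ) with hV
    set eig : Fin d → ℝ := hH.eigenvalues with heig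
    have hunit : star V * V = 1 :=
      Matrix.mem_unitaryGroup_iff'.mp hH.eigenvectorUnitary.prop
    have hentry : ∀ x y, σ x y = ∑ i, ((eig i : ℝ) : ℂ) * (V x i * star (V y i)) := by
      intro x y
      conv_lhs => rw [hH.spectral_theorem, Unitary.conjStarAlgAut_apply]
      rw [Matrix.mul_apply]
      refine Finset.sum_congr rfl fun j _ => ?_
      rw [Matrix.mul_diagonal, Matrix.star_apply]
      simp only [Function.comp_apply, RCLike.ofReal_alg, smul_eq_mul, mul_one]
      simp [Complex.coe_algebraMap, hV, heig]
      ring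
    have heig0 : ∀ i, 0 ≤ eig i := fun i => hps.eigenvalues_nonneg i
    have htr1 : ∑ i, eig i = 1 := by
      have h1 : σ.trace = ∑ i, ((eig i : ℝ) : ℂ) := by
        conv_lhs => rw [hH.spectral_theorem, Unitary.conjStarAlgAut_apply]
        rw [Matrix.trace_mul_comm, ← Matrix.mul_assoc, hunit, Matrix.one_mul,
          Matrix.trace_diagonal]
        refine Finset.sum_congr rfl fun i _ => ?_
        simp [Complex.coe_algebraMap]
        rfl
      rw [htr] at h1
      exact_mod_cast h1.symm
    have hucol : ∀ i, ∑ x, Complex.normSq (V x i) = 1 := by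
      intro i
      have h2 : (star V * V) i i = 1 := by rw [hunit, Matrix.one_apply_eq]
      rw [Matrix.mul_apply] at h2
      have h3 : ((∑ x, Complex.normSq (V x i) : ℝ) : ℂ) = 1 := by
        calc ((∑ x, Complex.normSq (V x i) : ℝ) : ℂ)
            = ∑ x, ((Complex.normSq (V x i) : ℝ) : ℂ) := by push_cast; rfl
          _ = ∑ x, star (V x i) * V x i := by
              refine Finset.sum_congr rfl fun x _ => ?_
              rw [Complex.star_def, mul_comm]
              exact (Complex.mul_conj _).symm
          _ = 1 := by
              rw [← h2]
              exact Finset.sum_congr rfl fun x _ => by rw [Matrix.star_apply]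
      exact_mod_cast h3
    have hdec0 : QI.measProb v0 σ
        = fun k => ∑ i, eig i * QI.measProb v0 (QI.pureState (fun x => V x i)) k :=
      funext fun k => MUBProof.measProb_decomp v0 σ eig (fun i x => V x i)
        (fun x y => hentry x y) k
    have hdec1 : QI.measProb v1 σ
        = fun k => ∑ i, eig i * QI.measProb v1 (QI.pureState (fun x => V x i)) k :=
      funext fun k => MUBProof.measProb_decomp v1 σ eig (fun i x => V x i)
        (fun x y => hentry x y) k
    have hpurei : ∀ i, Real.log d
        ≤ QI.shannon (QI.measProb v0 (QI.pureState (fun x => V x i)))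
          + QI.shannon (QI.measProb v1 (QI.pureState (fun x => V x i))) :=
      fun i => MUBProof.pure_bound hd v0 v1 h0 h1 hmub _ (hucol i)
    have hP0 : ∀ i k, 0 ≤ QI.measProb v0 (QI.pureState (fun x => V x i)) k := by
      intro i k
      rw [MUBProof.measProb_pure]
      exact Complex.normSq_nonneg _
    have hP1 : ∀ i k, 0 ≤ QI.measProb v1 (QI.pureState (fun x => V x i)) k := by
      intro i k
      rw [MUBProof.measProb_pure]
      exact Complex.normSq_nonneg _
    rw [hdec0, hdec1]
    calc Real.log d = ∑ i, eig i * Real.log d := by rw [← Finset.sum_mul, htr1, one_mul]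
      _ ≤ ∑ i, eig i * (QI.shannon (QI.measProb v0 (QI.pureState (fun x => V x i)))
            + QI.shannon (QI.measProb v1 (QI.pureState (fun x => V x i)))) :=
          Finset.sum_le_sum fun i _ => mul_le_mul_of_nonneg_left (hpurei i) (heig0 i)
      _ = (∑ i, eig i * QI.shannon (QI.measProb v0 (QI.pureState (fun x => V x i))))
            + ∑ i, eig i * QI.shannon (QI.measProb v1 (QI.pureState (fun x => V x i))) := by
          rw [← Finset.sum_add_distrib]
          exact Finset.sum_congr rfl fun i _ => by ring
      _ ≤ _ := add_le_add
          (MUBProof.shannon_concave eig heig0 htr1 _ hP0)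
          (MUBProof.shannon_concave eig heig0 htr1 _ hP1)
end
end

section
/- For the two-Pauli channel M_{XZ}(μ) = (1/3)μ + (1/3)σ_x μ σ_x + (1/3)σ_z μ σ_z on a single qubit, every pure input state is mapped to a state with eigenvalues (2/3, 1/3); hence the minimum output entropy equals h(1/3), the binary entropy of 1/3. -/
open Matrix Kronecker BigOperators ComplexOrder

noncomputable section

namespace QI

/-- The spectrum (eigenvalue multiset) of a Hermitian matrix. -/
def spec {n : Type*} [Fintype n] [DecidableEq n] (ρ : Matrix n n ℂ) : Multiset ℝ :=
  if h : ρ.IsHermitian then Finset.univ.val.map h.eigenvalues else 0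

end QI

namespace QI

def pauliX : Matrix (Fin 2) (Fin 2) ℂ := !![0, 1; 1, 0]
def pauliZ : Matrix (Fin 2) (Fin 2) ℂ := !![1, 0; 0, -1]

/-- The two-Pauli channel at `t = 1/3`:
`M_{XZ}(μ) = (1/3)μ + (1/3)σₓμσₓ + (1/3)σ_zμσ_z`. -/
def twoPauli (μ : Matrix (Fin 2) (Fin 2) ℂ) : Matrix (Fin 2) (Fin 2) ℂ :=
  (1 / 3 : ℂ) • μ + (1 / 3 : ℂ) • (pauliX * μ * pauliX) + (1 / 3 : ℂ) • (pauliZ * μ * pauliZ)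

end QI

/-! The channel scales the Bloch vector of its input by `1/3`, so it preserves the trace and
sends the determinant `(1 - |r|²)/4` of a qubit state to `(1 - |r|²/9)/4`. A pure input has
trace `1` and determinant `0`, so its output has trace `1` and determinant `2/9`: a Hermitian
`2 × 2` matrix whose eigenvalues are the roots `2/3, 1/3` of `x² - x + 2/9`. The output entropy
is therefore `h(1/3)` for every pure input, and so is its infimum. -/

namespace QI

lemma isHermitian_pureState {A : Type*} (ψ : A → ℂ) : (pureState ψ).IsHermitian := by
  ext i j
  simp [pureState, mul_comm]

section General

variable {A : Type*} [Fintype A]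

lemma vnEntropy_eq_neg_sum_spec [DecidableEq A] {ρ : Matrix A A ℂ} (hρ : ρ.IsHermitian) :
    vnEntropy ρ = -((spec ρ).map fun x => x * Real.log x).sum := by
  rw [vnEntropy, spec, dif_pos hρ, dif_pos hρ, Multiset.map_map]
  rfl

lemma trace_pureState {ψ : A → ℂ} (hψ : IsUnitVec ψ) : (pureState ψ).trace = 1 := by
  simp only [trace, diag, pureState, of_apply, Complex.star_def, Complex.mul_conj]
  exact_mod_cast hψ

lemma exists_isUnitVec [DecidableEq A] [Nonempty A] : ∃ ψ : A → ℂ, IsUnitVec ψ := by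
  rcases ‹Nonempty A› with ⟨a⟩
  refine ⟨Pi.single a 1, ?_⟩
  rw [IsUnitVec, Finset.sum_eq_single a] <;> simp_all

lemma Smin_eq_of_forall_vnEntropy_eq [DecidableEq A] [Nonempty A] {B : Type*} [Fintype B]
    [DecidableEq B] {M : Matrix A A ℂ → Matrix B B ℂ} {c : ℝ}
    (h : ∀ ψ, IsUnitVec ψ → vnEntropy (M (pureState ψ)) = c) : Smin M = c := by
  obtain ⟨ψ₀, hψ₀⟩ := exists_isUnitVec (A := A)
  have hset : {x | ∃ ψ : A → ℂ, IsUnitVec ψ ∧ x = vnEntropy (M (pureState ψ))} = {c} := by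
    ext x
    constructor
    · rintro ⟨ψ, hψ, rfl⟩
      exact h ψ hψ
    · rintro rfl
      exact ⟨ψ₀, hψ₀, (h ψ₀ hψ₀).symm⟩
  rw [Smin, hset, csInf_singleton]

end General

lemma spec_eq_of_trace_of_det {ρ : Matrix (Fin 2) (Fin 2) ℂ} (hρ : ρ.IsHermitian) {a b : ℝ}
    (htr : ρ.trace = a + b) (hdet : ρ.det = a * b) : spec ρ = a ::ₘ {b} := by
  have hsum : hρ.eigenvalues 0 + hρ.eigenvalues 1 = a + b := by
    have := hρ.trace_eq_sum_eigenvalues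
    rw [htr, Fin.sum_univ_two] at this
    apply Complex.ofReal_injective
    push_cast
    exact this.symm
  have hprod : hρ.eigenvalues 0 * hρ.eigenvalues 1 = a * b := by
    have := hρ.det_eq_prod_eigenvalues
    rw [hdet, Fin.prod_univ_two] at this
    apply Complex.ofReal_injective
    push_cast
    exact this.symm
  have hroot : (hρ.eigenvalues 0 - a) * (hρ.eigenvalues 0 - b) = 0 := by
    linear_combination hρ.eigenvalues 0 * hsum - hprod
  have huniv : (Finset.univ : Finset (Fin 2)).val = {0, 1} := rfl
  rw [spec, dif_pos hρ, huniv, Multiset.insert_eq_cons, Multiset.map_cons,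
    Multiset.map_singleton]
  rcases mul_eq_zero.mp hroot with h0 | h0
  · rw [show hρ.eigenvalues 0 = a by linarith, show hρ.eigenvalues 1 = b by linarith]
  · rw [show hρ.eigenvalues 0 = b by linarith, show hρ.eigenvalues 1 = a by linarith]
    exact Multiset.cons_swap _ _ _

lemma det_pureState_fin_two (ψ : Fin 2 → ℂ) : (pureState ψ).det = 0 := by
  rw [det_fin_two]
  simp only [pureState, of_apply]
  ring

lemma isHermitian_pauliX : pauliX.IsHermitian := by
  ext i j
  fin_cases i <;> fin_cases j <;> simp [pauliX]

lemma isHermitian_pauliZ : pauliZ.IsHermitian := by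
  ext i j
  fin_cases i <;> fin_cases j <;> simp [pauliZ]

lemma pauliX_mul_self : pauliX * pauliX = 1 := by
  simp [pauliX, one_fin_two]

lemma pauliZ_mul_self : pauliZ * pauliZ = 1 := by
  simp [pauliZ, one_fin_two]

lemma isHermitian_twoPauli {μ : Matrix (Fin 2) (Fin 2) ℂ} (hμ : μ.IsHermitian) :
    (twoPauli μ).IsHermitian := by
  have hthird : IsSelfAdjoint (1 / 3 : ℂ) := by simp [IsSelfAdjoint]
  have hX := isHermitian_conjTranspose_mul_mul pauliX hμ
  have hZ := isHermitian_conjTranspose_mul_mul pauliZ hμ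
  rw [isHermitian_pauliX.eq] at hX
  rw [isHermitian_pauliZ.eq] at hZ
  exact ((hμ.smul hthird).add (hX.smul hthird)).add (hZ.smul hthird)

lemma trace_twoPauli (μ : Matrix (Fin 2) (Fin 2) ℂ) : (twoPauli μ).trace = μ.trace := by
  simp only [twoPauli, trace_add, trace_smul, trace_mul_cycle _ μ, pauliX_mul_self,
    pauliZ_mul_self, Matrix.one_mul, smul_eq_mul]
  ring

lemma det_twoPauli (μ : Matrix (Fin 2) (Fin 2) ℂ) :
    (twoPauli μ).det = 2 / 9 * μ.trace ^ 2 + μ.det / 9 := by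
  simp only [det_fin_two, trace_fin_two, twoPauli, pauliX, pauliZ, Matrix.add_apply,
    Matrix.smul_apply, mul_apply, Fin.sum_univ_two, of_apply, cons_val', cons_val_zero, cons_val_one,
    empty_val', cons_val_fin_one, smul_eq_mul]
  ring

lemma spec_twoPauli_pureState {ψ : Fin 2 → ℂ} (hψ : IsUnitVec ψ) :
    spec (twoPauli (pureState ψ)) = (2 / 3 : ℝ) ::ₘ {(1 / 3 : ℝ)} := by
  refine spec_eq_of_trace_of_det (isHermitian_twoPauli (isHermitian_pureState ψ)) ?_ ?_
  · rw [trace_twoPauli, trace_pureState hψ]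
    norm_num
  · rw [det_twoPauli, trace_pureState hψ, det_pureState_fin_two]
    norm_num

lemma vnEntropy_twoPauli_pureState {ψ : Fin 2 → ℂ} (hψ : IsUnitVec ψ) :
    vnEntropy (twoPauli (pureState ψ)) = binEnt (1 / 3) := by
  rw [vnEntropy_eq_neg_sum_spec (isHermitian_twoPauli (isHermitian_pureState ψ)),
    spec_twoPauli_pureState hψ, binEnt]
  norm_num
  ring

end QI

/-- the two-Pauli channel with `t = 1/3` maps every pure qubit state to a
state with eigenvalues `(2/3, 1/3)`; hence its minimum output entropy is `h(1/3)`. -/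
theorem twoPauli_output_spectrum_and_smin :
    (∀ ψ : Fin 2 → ℂ, QI.IsUnitVec ψ →
      QI.spec (QI.twoPauli (QI.pureState ψ)) = (2 / 3 : ℝ) ::ₘ {(1 / 3 : ℝ)}) ∧
    QI.Smin QI.twoPauli = QI.binEnt (1 / 3) :=
  ⟨fun _ hψ => QI.spec_twoPauli_pureState hψ,
    QI.Smin_eq_of_forall_vnEntropy_eq fun _ hψ => QI.vnEntropy_twoPauli_pureState hψ⟩
end
end
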